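/- arXiv:1806.05460 — 6 statements merged into one kernel-verified Lean document; each statement's English description precedes it below -/
import Mathlib

section
/- Let c > 1, α ∈ (1,2) and let θ be an admissible function with respect to c and α. Define γ(x) := e^{(α−1)x} ∫_{e^x}^∞ y^{−α} θ(log y) dy for x ∈ ℝ. Then for every y > 0 one has ∫_y^∞ x^{−α} θ(log x) dx = y^{1−α} γ(log y), and γ is a continuous admissible function with respect to c and α: γ is continuous, strictly positive, log(c^{1/α})-periodic, and satisfies γ(y+δ) ≤ e^{αδ} γ(y) for all y ∈ ℝ and δ ≥ 0. -/
/-!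
The substitution `y = e^δ z` shows that `γ (x + δ)` is the transform of `θ (· + δ)` evaluated at
`x`, so positivity, periodicity and the growth bound of `θ` pass to `γ` pointwise under the
integral. The integrals converge since an admissible `θ` is measurable (`θ y * e^(-α y)` is
antitone) and bounded (periodic, and controlled on one period by the growth bound); continuity of
`γ` is continuity of a tail integral.
-/

open MeasureTheory Real Filter Set

noncomputable section

/-- A function `θ : ℝ → (0,∞)` is admissible w.r.t. `c` and `α` if it is
`log (c^(1/α))`-periodic and satisfies the growth restriction
`θ (y+δ) ≤ exp (α δ) * θ y` for all `y` and `δ ≥ 0`. -/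
def IsAdmissible (c α : ℝ) (θ : ℝ → ℝ) : Prop :=
  (∀ x, 0 < θ x) ∧
  Function.Periodic θ (Real.log (c ^ (1 / α))) ∧
  ∀ y δ : ℝ, 0 ≤ δ → θ (y + δ) ≤ Real.exp (α * δ) * θ y

lemma antitone_mul_exp_neg_of_growth {α : ℝ} {θ : ℝ → ℝ}
    (hgrow : ∀ y δ : ℝ, 0 ≤ δ → θ (y + δ) ≤ exp (α * δ) * θ y) :
    Antitone fun y => θ y * exp (-(α * y)) := by
  intro a b hab
  have h := hgrow a (b - a) (sub_nonneg.mpr hab)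
  rw [add_sub_cancel] at h
  calc θ b * exp (-(α * b)) ≤ exp (α * (b - a)) * θ a * exp (-(α * b)) := by gcongr
    _ = θ a * exp (-(α * a)) := by
      rw [mul_comm (exp _) (θ a), mul_assoc, ← exp_add]; ring_nf

lemma measurable_of_growth {α : ℝ} {θ : ℝ → ℝ}
    (hgrow : ∀ y δ : ℝ, 0 ≤ δ → θ (y + δ) ≤ exp (α * δ) * θ y) : Measurable θ := by
  have hθ : θ = fun y => θ y * exp (-(α * y)) * exp (α * y) := by
    funext y; rw [mul_assoc, ← exp_add, neg_add_cancel, exp_zero, mul_one]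
  rw [hθ]
  exact (antitone_mul_exp_neg_of_growth hgrow).measurable.mul (by fun_prop)

lemma Function.Periodic.le_exp_mul_of_growth {α p : ℝ} {θ : ℝ → ℝ} (hper : θ.Periodic p)
    (hp : 0 < p) (hα : 0 ≤ α) (hθ₀ : 0 ≤ θ 0)
    (hgrow : ∀ y δ : ℝ, 0 ≤ δ → θ (y + δ) ≤ exp (α * δ) * θ y) (x : ℝ) :
    θ x ≤ exp (α * p) * θ 0 := by
  obtain ⟨y, hy, hxy⟩ := hper.exists_mem_Ico₀ hp x
  calc θ x = θ (0 + y) := by rw [hxy, zero_add]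
    _ ≤ exp (α * y) * θ 0 := hgrow 0 y hy.1
    _ ≤ exp (α * p) * θ 0 := by gcongr; exact hy.2.le

lemma integrableOn_Ioi_rpow_neg_mul_comp_log {α M t : ℝ} {θ : ℝ → ℝ} (hα : 1 < α)
    (hθ : Measurable θ) (hM : ∀ x, ‖θ x‖ ≤ M) (ht : 0 < t) :
    IntegrableOn (fun y => y ^ (-α) * θ (log y)) (Ioi t) :=
  (integrableOn_Ioi_rpow_of_lt (neg_lt_neg hα) ht).mul_bdd
    (hθ.comp measurable_log).aestronglyMeasurable (ae_of_all _ fun y => hM (log y))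

lemma continuousAt_integral_Ioi {f : ℝ → ℝ} {a t : ℝ} (hf : IntegrableOn f (Ioi a))
    (ht : a < t) : ContinuousAt (fun s => ∫ x in Ioi s, f x) t := by
  obtain ⟨m, ham, hmt⟩ := exists_between ht
  have hm : IntegrableOn f (Ioi m) := hf.mono_set (Ioi_subset_Ioi ham.le)
  have hprim : ContinuousAt (fun s => ∫ x in m..s, f x) t := by
    refine (intervalIntegral.continuousOn_primitive_interval (b := t + 1)
      (hf.mono_set ?_)).continuousAt ?_
    · rw [uIcc_of_le (by linarith)]
      exact fun x hx => lt_of_lt_of_le (by linarith) hx.1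
    · rw [uIcc_of_le (by linarith)]
      exact Icc_mem_nhds (by linarith) (by linarith)
  refine ((continuousAt_const (y := ∫ x in Ioi m, f x)).sub hprim).congr ?_
  filter_upwards [Ioi_mem_nhds hmt] with s hs
  rw [Pi.sub_apply, ← intervalIntegral.integral_Ioi_sub_Ioi hm hs.le, sub_sub_cancel]

def tailTransform (α : ℝ) (θ : ℝ → ℝ) (x : ℝ) : ℝ :=
  exp ((α - 1) * x) * ∫ y in Ioi (exp x), y ^ (-α) * θ (log y)

section tailTransform

variable {α : ℝ} {θ η : ℝ → ℝ}

lemma integral_Ioi_rpow_neg_mul_comp_log {y : ℝ} (hy : 0 < y) :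
    ∫ x in Ioi y, x ^ (-α) * θ (log x) = y ^ (1 - α) * tailTransform α θ (log y) := by
  rw [tailTransform, exp_log hy, ← mul_assoc, rpow_def_of_pos hy, ← exp_add]
  ring_nf
  rw [exp_zero, one_mul]

lemma tailTransform_add (x δ : ℝ) :
    tailTransform α θ (x + δ) = tailTransform α (fun u => θ (u + δ)) x := by
  have hintegrand : ∀ z ∈ Ioi (exp x), (exp δ * z) ^ (-α) * θ (log (exp δ * z)) =
      exp (-α * δ) * (z ^ (-α) * θ (log z + δ)) := by
    intro z hz
    have hz : 0 < z := (exp_pos x).trans hz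
    rw [mul_rpow (exp_pos δ).le hz.le, log_mul (exp_ne_zero δ) hz.ne', log_exp, ← exp_mul,
      add_comm δ]
    ring_nf
  have hI : ∫ y in Ioi (exp (x + δ)), y ^ (-α) * θ (log y) =
      exp δ * (exp (-α * δ) * ∫ z in Ioi (exp x), z ^ (-α) * θ (log z + δ)) := by
    rw [add_comm x δ, exp_add, ← integral_comp_mul_left_Ioi' _ _ (exp_pos δ), smul_eq_mul,
      setIntegral_congr_fun measurableSet_Ioi hintegrand, integral_const_mul]
  rw [tailTransform, tailTransform, hI, ← mul_assoc, ← mul_assoc, ← exp_add, ← exp_add]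
  congr 2
  ring

lemma tailTransform_const_mul (a x : ℝ) :
    tailTransform α (fun u => a * θ u) x = a * tailTransform α θ x := by
  simp only [tailTransform, mul_left_comm _ a, integral_const_mul]

lemma tailTransform_mono {x : ℝ}
    (hθ : IntegrableOn (fun y => y ^ (-α) * θ (log y)) (Ioi (exp x)))
    (hη : IntegrableOn (fun y => y ^ (-α) * η (log y)) (Ioi (exp x))) (hθη : θ ≤ η) :
    tailTransform α θ x ≤ tailTransform α η x := by
  refine mul_le_mul_of_nonneg_left (setIntegral_mono_on hθ hη measurableSet_Ioi fun y hy => ?_)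
    (exp_pos _).le
  exact mul_le_mul_of_nonneg_left (hθη _) (rpow_nonneg ((exp_pos x).trans hy).le _)

lemma tailTransform_pos {x : ℝ}
    (hθ : IntegrableOn (fun y => y ^ (-α) * θ (log y)) (Ioi (exp x))) (hpos : ∀ u, 0 < θ u) :
    0 < tailTransform α θ x := by
  have hpos' : ∀ y ∈ Ioi (exp x), 0 < y ^ (-α) * θ (log y) := fun y hy =>
    mul_pos (rpow_pos_of_pos ((exp_pos x).trans hy) _) (hpos _)
  refine mul_pos (exp_pos _) ?_
  rw [setIntegral_pos_iff_support_of_nonneg_ae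
    ((ae_restrict_mem measurableSet_Ioi).mono fun y hy => (hpos' y hy).le) hθ,
    inter_eq_right.mpr fun y hy => Function.mem_support.mpr (hpos' y hy).ne', volume_Ioi]
  exact ENNReal.zero_lt_top

lemma continuous_tailTransform
    (hθ : ∀ t, 0 < t → IntegrableOn (fun y => y ^ (-α) * θ (log y)) (Ioi t)) :
    Continuous (tailTransform α θ) := by
  refine continuous_iff_continuousAt.mpr fun x => ?_
  have hF := continuousAt_integral_Ioi (hθ _ (half_pos (exp_pos x))) (half_lt_self (exp_pos x))
  exact (by fun_prop : Continuous fun x => exp ((α - 1) * x)).continuousAt.mul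
    (hF.comp continuous_exp.continuousAt)

end tailTransform

namespace IsAdmissible

variable {c α : ℝ} {θ : ℝ → ℝ}

lemma comp_add_const (hθ : IsAdmissible c α θ) (δ : ℝ) :
    IsAdmissible c α fun u => θ (u + δ) :=
  ⟨fun u => hθ.1 _, hθ.2.1.add_const δ, fun y ε hε => by
    simpa only [add_right_comm] using hθ.2.2 (y + δ) ε hε⟩

lemma integrableOn (hc : 1 < c) (hα : 1 < α) (hθ : IsAdmissible c α θ) {t : ℝ} (ht : 0 < t) :
    IntegrableOn (fun y => y ^ (-α) * θ (log y)) (Ioi t) := by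
  obtain ⟨hpos, hper, hgrow⟩ := hθ
  have hp : 0 < log (c ^ (1 / α)) :=
    log_pos (one_lt_rpow hc (one_div_pos.mpr (zero_lt_one.trans hα)))
  refine integrableOn_Ioi_rpow_neg_mul_comp_log (M := exp (α * log (c ^ (1 / α))) * θ 0) hα
    (measurable_of_growth hgrow) (fun x => ?_) ht
  rw [norm_of_nonneg (hpos x).le]
  exact hper.le_exp_mul_of_growth hp (zero_le_one.trans hα.le) (hpos 0).le hgrow x

lemma tailTransform (hc : 1 < c) (hα : 1 < α) (hθ : IsAdmissible c α θ) :
    IsAdmissible c α (tailTransform α θ) := by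
  refine ⟨fun x => tailTransform_pos (hθ.integrableOn hc hα (exp_pos x)) hθ.1, fun x => ?_,
    fun x δ hδ => ?_⟩
  · rw [tailTransform_add]
    simp only [hθ.2.1 _]
  · rw [tailTransform_add, ← tailTransform_const_mul]
    refine tailTransform_mono ((hθ.comp_add_const δ).integrableOn hc hα (exp_pos x)) ?_
      fun u => hθ.2.2 u δ hδ
    have h := (hθ.integrableOn hc hα (exp_pos x)).const_mul (exp (α * δ))
    simp only [mul_left_comm (exp (α * δ))] at h
    exact h

end IsAdmissible

theorem stmt0 (c α : ℝ) (hc : 1 < c) (hα : α ∈ Set.Ioo (1 : ℝ) 2)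
    (θ : ℝ → ℝ) (hθ : IsAdmissible c α θ)
    (γ : ℝ → ℝ)
    (hγ : ∀ x : ℝ,
      γ x = Real.exp ((α - 1) * x) * ∫ y in Set.Ioi (Real.exp x), y ^ (-α) * θ (Real.log y)) :
    (∀ y : ℝ, 0 < y →
      ∫ x in Set.Ioi y, x ^ (-α) * θ (Real.log x) = y ^ (1 - α) * γ (Real.log y)) ∧
    Continuous γ ∧ IsAdmissible c α γ := by
  obtain rfl : γ = tailTransform α θ := funext hγ
  exact ⟨fun y hy => integral_Ioi_rpow_neg_mul_comp_log hy,
    continuous_tailTransform fun t ht => hθ.integrableOn hc hα.1 ht,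
    hθ.tailTransform hc hα.1⟩
end
end

section
/- Let c > 1, α ∈ (0,1), let θ be an admissible function with respect to c and α, and let φ₁ be the measure on (0,∞) with φ₁((r,∞)) = r^{−α} θ(log r) for all r > 0. If f, f′, f″ ∈ C₀(ℝ) ∩ L¹(ℝ), then for every x ∈ ℝ the generator form of the positive semi-fractional derivative equals its Caputo form: ∫₀^∞ (f(x) − f(x−y)) dφ₁(y) = ∫₀^∞ f′(x−y) y^{−α} θ(log y) dy, and both integrals converge absolutely. -/
open MeasureTheory Real Filter Set

noncomputable section

/-- `f ∈ C₀(ℝ) ∩ L¹(ℝ)`: continuous, vanishing at `±∞`, and Lebesgue integrable. -/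
def MemC0L1 (f : ℝ → ℝ) : Prop :=
  Continuous f ∧ Tendsto f (cocompact ℝ) (nhds 0) ∧ Integrable f

/-! Since `f x - f (x - y) = ∫ t in 0..y, f' (x - t)`, Fubini for the kernel
`𝟙{0 < t < y} f' (x - t)` against `φ₁ ⊗ dt` turns the generator form into
`∫ t in Ioi 0, f' (x - t) * φ₁ (Ioi t)`, which is the Caputo form. Integrability comes from
boundedness of `θ` (periodic, with controlled growth over one period): the tail
`t ^ (-α) * θ (log t)` is `O(t ^ (-α))`, integrable near `0` as `α < 1` and bounded near `∞`,
where `f' ∈ L¹` takes over. -/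

namespace IsAdmissible

variable {c α : ℝ} {θ : ℝ → ℝ}

theorem antitone_exp_neg_mul (hθ : IsAdmissible c α θ) :
    Antitone fun y => exp (-(α * y)) * θ y := by
  intro y z hyz
  have h := hθ.2.2 y (z - y) (sub_nonneg.2 hyz)
  rw [add_sub_cancel] at h
  calc exp (-(α * z)) * θ z ≤ exp (-(α * z)) * (exp (α * (z - y)) * θ y) := by gcongr
    _ = exp (-(α * y)) * θ y := by rw [← mul_assoc, ← exp_add]; ring_nf

theorem measurable (hθ : IsAdmissible c α θ) : Measurable θ := by
  have h : θ = fun y => exp (α * y) * (exp (-(α * y)) * θ y) := by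
    ext y; rw [← mul_assoc, ← exp_add, add_neg_cancel, exp_zero, one_mul]
  rw [h]
  exact (measurable_exp.comp (measurable_const.mul measurable_id)).mul
    hθ.antitone_exp_neg_mul.measurable

theorem le_exp_mul_period (hθ : IsAdmissible c α θ) (hc : 1 < c) (hα : 0 < α) (y : ℝ) :
    θ y ≤ exp (α * log (c ^ (1 / α))) * θ 0 := by
  set p := log (c ^ (1 / α))
  have hp : 0 < p := log_pos (one_lt_rpow hc (by positivity))
  set z := y - ⌊y / p⌋ * p
  have hz : 0 ≤ z := Int.sub_floor_div_mul_nonneg y hp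
  calc θ y = θ (0 + z) := by rw [zero_add, hθ.2.1.sub_int_mul_eq]
    _ ≤ exp (α * z) * θ 0 := hθ.2.2 0 z hz
    _ ≤ exp (α * p) * θ 0 := by
      gcongr
      · exact (hθ.1 0).le
      · exact (Int.sub_floor_div_mul_lt y hp).le

theorem integrableOn_mul_rpow_neg_mul_comp_log (hθ : IsAdmissible c α θ) (hc : 1 < c)
    (hα : α ∈ Ioo 0 1) {h : ℝ → ℝ} (hh : Integrable h)
    {C : ℝ} (hC : ∀ t, ‖h t‖ ≤ C) :
    IntegrableOn (fun t => h t * (t ^ (-α) * θ (log t))) (Ioi 0) := by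
  set M := exp (α * log (c ^ (1 / α))) * θ 0
  have hM : 0 ≤ M := mul_nonneg (exp_pos _).le (hθ.1 0).le
  have hmeas : AEStronglyMeasurable (fun t => h t * (t ^ (-α) * θ (log t))) :=
    hh.aestronglyMeasurable.mul
      ((measurable_id.pow_const _).mul (hθ.measurable.comp measurable_log)).aestronglyMeasurable
  have hbound : ∀ t, 0 < t → ‖h t * (t ^ (-α) * θ (log t))‖ ≤ ‖h t‖ * (M * t ^ (-α)) := by
    intro t ht
    rw [norm_mul, norm_of_nonneg (mul_pos (rpow_pos_of_pos ht _) (hθ.1 _)).le, mul_comm M]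
    gcongr
    exact hθ.le_exp_mul_period hc hα.1 _
  rw [← Ioc_union_Ioi_eq_Ioi zero_le_one]
  refine IntegrableOn.union ?_ ?_
  · have hrpow : IntegrableOn (fun t : ℝ => t ^ (-α)) (Ioc 0 1) :=
      (intervalIntegral.intervalIntegrable_rpow' (by linarith [hα.2])).1
    refine Integrable.mono' (hrpow.const_mul (C * M)) hmeas.restrict ?_
    filter_upwards [ae_restrict_mem measurableSet_Ioc] with t ht
    calc _ ≤ ‖h t‖ * (M * t ^ (-α)) := hbound t ht.1
      _ ≤ C * (M * t ^ (-α)) :=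
        mul_le_mul_of_nonneg_right (hC t) (mul_nonneg hM (rpow_nonneg ht.1.le _))
      _ = C * M * t ^ (-α) := by ring
  · refine Integrable.mono' (hh.norm.const_mul M).integrableOn hmeas.restrict ?_
    filter_upwards [ae_restrict_mem measurableSet_Ioi] with t ht
    calc _ ≤ ‖h t‖ * (M * t ^ (-α)) := hbound t (zero_lt_one.trans ht)
      _ ≤ ‖h t‖ * (M * 1) := by
        gcongr
        exact rpow_le_one_of_one_le_of_nonpos ht.le (by linarith [hα.1])
      _ = M * ‖h t‖ := by ring

end IsAdmissible

section TailMeasure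

variable {μ : Measure ℝ}

theorem sigmaFinite_of_measure_Iic_zero (hμ0 : μ (Iic 0) = 0)
    (hμ : ∀ t, 0 < t → μ (Ioi t) ≠ ⊤) : SigmaFinite μ := by
  refine ⟨⟨⟨fun n : ℕ => Iic 0 ∪ Ioi (1 / (n + 1) : ℝ), fun _ => trivial, fun n => ?_, ?_⟩⟩⟩
  · exact (measure_union_le _ _).trans_lt <| by
      rw [hμ0, zero_add]; exact (hμ _ (by positivity)).lt_top
  · refine eq_univ_of_forall fun t => ?_
    rcases le_or_gt t 0 with ht | ht
    · exact mem_iUnion.2 ⟨0, Or.inl ht⟩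
    · obtain ⟨n, hn⟩ := exists_nat_one_div_lt ht
      exact mem_iUnion.2 ⟨n, Or.inr hn⟩

def triangleKernel (h : ℝ → ℝ) : ℝ × ℝ → ℝ :=
  {q : ℝ × ℝ | 0 < q.2 ∧ q.2 < q.1}.indicator fun q => h q.2

theorem triangleKernel_left (h : ℝ → ℝ) (y : ℝ) :
    (fun t => triangleKernel h (y, t)) = (Ioo 0 y).indicator h :=
  rfl

theorem triangleKernel_right (h : ℝ → ℝ) (t : ℝ) :
    (fun y => triangleKernel h (y, t)) = (Ioi t).indicator fun _ => (Ioi 0).indicator h t := by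
  ext y
  simp only [triangleKernel, indicator_apply, mem_ofPred_eq, mem_Ioi]
  split_ifs <;> tauto

theorem integral_triangleKernel_right (h : ℝ → ℝ) (t : ℝ) :
    ∫ y, triangleKernel h (y, t) ∂μ = (Ioi 0).indicator (fun t => h t * μ.real (Ioi t)) t := by
  rw [triangleKernel_right, integral_indicator_const _ measurableSet_Ioi, smul_eq_mul]
  by_cases ht : t ∈ Ioi 0
  · rw [indicator_of_mem ht, indicator_of_mem ht, mul_comm]
  · rw [indicator_of_notMem ht, indicator_of_notMem ht, mul_zero]

theorem integral_norm_triangleKernel_right (h : ℝ → ℝ) (t : ℝ) :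
    ∫ y, ‖triangleKernel h (y, t)‖ ∂μ = ‖∫ y, triangleKernel h (y, t) ∂μ‖ := by
  change ∫ y, ‖(fun y => triangleKernel h (y, t)) y‖ ∂μ =
    ‖∫ y, (fun y => triangleKernel h (y, t)) y ∂μ‖
  rw [triangleKernel_right]
  simp_rw [norm_indicator_eq_indicator_norm]
  rw [integral_indicator_const _ measurableSet_Ioi, integral_indicator_const _ measurableSet_Ioi,
    norm_smul, norm_of_nonneg measureReal_nonneg, smul_eq_mul, norm_indicator_eq_indicator_norm]

theorem measurable_triangleKernel {h : ℝ → ℝ} (hh : Measurable h) :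
    Measurable (triangleKernel h) :=
  (hh.comp measurable_snd).indicator <| (measurableSet_lt measurable_const measurable_snd).inter
    (measurableSet_lt measurable_snd measurable_fst)

theorem integrable_triangleKernel [SFinite μ] (hμ : ∀ t, 0 < t → μ (Ioi t) ≠ ⊤) {h : ℝ → ℝ}
    (hh : Measurable h) (hint : IntegrableOn (fun t => h t * μ.real (Ioi t)) (Ioi 0)) :
    Integrable (triangleKernel h) (μ.prod volume) := by
  refine (integrable_prod_iff' (measurable_triangleKernel hh).aestronglyMeasurable).2
    ⟨ae_of_all _ fun t => ?_, ?_⟩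
  · rw [triangleKernel_right, integrable_indicator_iff measurableSet_Ioi, integrableOn_const_iff]
    by_cases ht : t ∈ Ioi 0
    · exact Or.inr (hμ t ht).lt_top
    · exact Or.inl (by rw [indicator_of_notMem ht, enorm_zero])
  · refine ((integrable_indicator_iff measurableSet_Ioi).2 hint.norm).congr
      (ae_of_all _ fun t => ?_)
    rw [← norm_indicator_eq_indicator_norm, ← integral_triangleKernel_right]
    exact (integral_norm_triangleKernel_right h t).symm

theorem integral_intervalIntegral_eq_setIntegral_mul_measureReal_Ioi (hμ0 : μ (Iic 0) = 0)
    (hμ : ∀ t, 0 < t → μ (Ioi t) ≠ ⊤) {h : ℝ → ℝ} (hh : Measurable h)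
    (hint : IntegrableOn (fun t => h t * μ.real (Ioi t)) (Ioi 0)) :
    Integrable (fun y => ∫ t in 0..y, h t) μ ∧
      ∫ y, (∫ t in 0..y, h t) ∂μ = ∫ t in Ioi 0, h t * μ.real (Ioi t) := by
  have := sigmaFinite_of_measure_Iic_zero hμ0 hμ
  have hK := integrable_triangleKernel hμ hh hint
  have hK_left : (fun y => ∫ t, triangleKernel h (y, t)) =ᵐ[μ] fun y => ∫ t in 0..y, h t := by
    filter_upwards [mem_ae_iff.2 (show μ (Ioi 0)ᶜ = 0 by rwa [compl_Ioi])] with y hy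
    rw [triangleKernel_left, integral_indicator measurableSet_Ioo,
      intervalIntegral.integral_of_le (le_of_lt hy), integral_Ioc_eq_integral_Ioo]
  refine ⟨hK.integral_prod_left.congr hK_left, ?_⟩
  calc ∫ y, (∫ t in 0..y, h t) ∂μ = ∫ y, (∫ t, triangleKernel h (y, t)) ∂μ :=
        integral_congr_ae hK_left.symm
    _ = ∫ t, ∫ y, triangleKernel h (y, t) ∂μ :=
        integral_integral_swap (f := fun y t => triangleKernel h (y, t)) hK
    _ = ∫ t in Ioi 0, h t * μ.real (Ioi t) := by
      simp_rw [integral_triangleKernel_right]; exact integral_indicator measurableSet_Ioi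

end TailMeasure

theorem MemC0L1.exists_norm_le {f : ℝ → ℝ} (hf : MemC0L1 f) : ∃ C, ∀ t, ‖f t‖ ≤ C :=
  let F : ZeroAtInftyContinuousMap ℝ ℝ := ⟨⟨f, hf.1⟩, hf.2.1⟩
  ⟨‖F.toBCF‖, F.toBCF.norm_coe_le_norm⟩

theorem sub_sub_eq_intervalIntegral {f f' : ℝ → ℝ} (hf : ∀ x, HasDerivAt f (f' x) x)
    (hf' : Continuous f') (x y : ℝ) : f x - f (x - y) = ∫ t in 0..y, f' (x - t) := by
  rw [intervalIntegral.integral_comp_sub_left, sub_zero,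
    intervalIntegral.integral_eq_sub_of_hasDerivAt (fun t _ => hf t) (hf'.intervalIntegrable _ _)]

theorem stmt1_general (c α : ℝ) (hc : 1 < c) (hα : α ∈ Set.Ioo (0 : ℝ) 1)
    (θ : ℝ → ℝ) (hθ : IsAdmissible c α θ)
    (φ₁ : Measure ℝ)
    (hφ : ∀ r : ℝ, 0 < r → φ₁ (Set.Ioi r) = ENNReal.ofReal (r ^ (-α) * θ (Real.log r)))
    (hφ0 : φ₁ (Set.Iic 0) = 0)
    (f f' : ℝ → ℝ)
    (hder1 : ∀ x, HasDerivAt f (f' x) x)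
    (hf' : MemC0L1 f') (x : ℝ) :
    Integrable (fun y => f x - f (x - y)) φ₁ ∧
    IntegrableOn (fun y => f' (x - y) * (y ^ (-α) * θ (Real.log y))) (Set.Ioi 0) volume ∧
    ∫ y, (f x - f (x - y)) ∂φ₁
      = ∫ y in Set.Ioi (0 : ℝ), f' (x - y) * (y ^ (-α) * θ (Real.log y)) := by
  obtain ⟨C, hC⟩ := hf'.exists_norm_le
  have htail : ∀ t ∈ Ioi 0, φ₁.real (Ioi t) = t ^ (-α) * θ (log t) := fun t ht => by
    rw [measureReal_def, hφ t ht,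
      ENNReal.toReal_ofReal (mul_pos (rpow_pos_of_pos ht _) (hθ.1 _)).le]
  have hcaputo : IntegrableOn (fun t => f' (x - t) * (t ^ (-α) * θ (log t))) (Ioi 0) :=
    hθ.integrableOn_mul_rpow_neg_mul_comp_log hc hα (hf'.2.2.comp_sub_left x) fun t => hC (x - t)
  have hgen := integral_intervalIntegral_eq_setIntegral_mul_measureReal_Ioi (h := (f' <| x - ·))
    hφ0 (fun t ht => by rw [hφ t ht]; exact ENNReal.ofReal_ne_top)
    (hf'.1.comp (continuous_const.sub continuous_id)).measurable
    (hcaputo.congr_fun (fun t ht => by rw [htail t ht]) measurableSet_Ioi)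
  simp_rw [sub_sub_eq_intervalIntegral hder1 hf'.1 x]
  exact ⟨hgen.1, hcaputo,
    hgen.2.trans (setIntegral_congr_fun measurableSet_Ioi fun t ht => by rw [htail t ht])⟩

theorem stmt1 (c α : ℝ) (hc : 1 < c) (hα : α ∈ Set.Ioo (0 : ℝ) 1)
    (θ : ℝ → ℝ) (hθ : IsAdmissible c α θ)
    (φ₁ : Measure ℝ)
    (hφ : ∀ r : ℝ, 0 < r → φ₁ (Set.Ioi r) = ENNReal.ofReal (r ^ (-α) * θ (Real.log r)))
    (hφ0 : φ₁ (Set.Iic 0) = 0)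
    (f f' f'' : ℝ → ℝ)
    (hder1 : ∀ x, HasDerivAt f (f' x) x) (hder2 : ∀ x, HasDerivAt f' (f'' x) x)
    (hf : MemC0L1 f) (hf' : MemC0L1 f') (hf'' : MemC0L1 f'') (x : ℝ) :
    Integrable (fun y => f x - f (x - y)) φ₁ ∧
    IntegrableOn (fun y => f' (x - y) * (y ^ (-α) * θ (Real.log y))) (Set.Ioi 0) volume ∧
    ∫ y, (f x - f (x - y)) ∂φ₁
      = ∫ y in Set.Ioi (0 : ℝ), f' (x - y) * (y ^ (-α) * θ (Real.log y)) :=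
  stmt1_general c α hc hα θ hθ φ₁ hφ hφ0 f f' hder1 hf' x
end
end

section
/- Let c > 1, α ∈ (1,2), let θ be an admissible function with respect to c and α, let φ₁ be the measure on (0,∞) with φ₁((r,∞)) = r^{−α} θ(log r) for all r > 0, and let γ(x) := e^{(α−1)x} ∫_{e^x}^∞ y^{−α} θ(log y) dy. If f, f′, f″ ∈ C₀(ℝ) ∩ L¹(ℝ), then for every x ∈ ℝ the generator form of the semi-fractional derivative equals both Caputo forms: ∫₀^∞ (f(x−y) − f(x) + y f′(x)) dφ₁(y) = ∫₀^∞ (f′(x) − f′(x−y)) y^{−α} θ(log y) dy = ∫₀^∞ f″(x−y) y^{1−α} γ(log y) dy, and all three integrals converge absolutely. -/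
/-!
Both identities come from Fubini's theorem applied to a primitive. For `y > 0`,
`f (x - y) - f x + y f' x = ∫₀^y (f' x - f' (x - t)) dt`, so integrating against `φ₁` and
swapping the integrals replaces `φ₁` by its tail `t ↦ φ₁ (t, ∞) = t^(-α) θ (log t)`. Likewise
`f' x - f' (x - y) = ∫₀^y f'' (x - s) ds`, and integrating against the measure
`ν = φ₁ (t, ∞) dt` on `(0, ∞)` gives the second Caputo form, since
`ν (s, ∞) = s^(1-α) γ (log s)`. Absolute convergence holds because `θ` is bounded: near `0` the
integrands are `O(t^(1-α))` by the mean value theorem; near `∞` the first is `O(t^(-α))` and the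
second is dominated by a multiple of `|f'' (x - ·)|`.
-/

open MeasureTheory Real Filter Set

noncomputable section

open scoped ENNReal Topology

theorem exists_norm_le_of_tendsto_cocompact {X E : Type*} [TopologicalSpace X]
    [NormedAddCommGroup E] {f : X → E} (hf : Continuous f)
    (h0 : Tendsto f (cocompact X) (𝓝 0)) : ∃ B, ∀ x, ‖f x‖ ≤ B :=
  let F : ZeroAtInftyContinuousMap X E := ⟨⟨f, hf⟩, h0⟩
  ⟨‖F.toBCF‖, F.toBCF.norm_coe_le_norm⟩

theorem IsAdmissible.exists_le {c α : ℝ} {θ : ℝ → ℝ} (hθ : IsAdmissible c α θ) (hc : 1 < c)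
    (hα : 0 < α) : ∃ M, ∀ t, θ t ≤ M := by
  obtain ⟨hpos, hper, hgrow⟩ := hθ
  have hp : 0 < log (c ^ (1 / α)) := log_pos (one_lt_rpow hc (by positivity))
  refine ⟨exp (α * log (c ^ (1 / α))) * θ 0, fun t => ?_⟩
  obtain ⟨s, hs, hts⟩ := hper.exists_mem_Ico₀ hp t
  calc θ t = θ (0 + s) := by rw [hts, zero_add]
    _ ≤ exp (α * s) * θ 0 := hgrow 0 s hs.1
    _ ≤ exp (α * log (c ^ (1 / α))) * θ 0 := by
        gcongr
        · exact (hpos 0).le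
        · exact hs.2.le

theorem integral_Ioo_comp_sub_eq_sub {F F' : ℝ → ℝ} (hF : ∀ u, HasDerivAt F (F' u) u)
    (hF' : Continuous F') (x : ℝ) {y : ℝ} (hy : 0 ≤ y) :
    ∫ t in Ioo 0 y, F' (x - t) = F x - F (x - y) := by
  rw [← integral_Ioc_eq_integral_Ioo, ← intervalIntegral.integral_of_le hy,
    intervalIntegral.integral_comp_sub_left,
    intervalIntegral.integral_eq_sub_of_hasDerivAt (fun u _ => hF u) (hF'.intervalIntegrable _ _),
    sub_zero]

theorem sigmaFinite_of_measure_Iic_eq_zero {μ : Measure ℝ} (hμ0 : μ (Iic 0) = 0)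
    (hμ_fin : ∀ t, 0 < t → μ (Ioi t) ≠ ∞) : SigmaFinite μ := by
  refine Measure.sigmaFinite_of_countable
    (S := insert (Iic 0) (range fun n : ℕ => Ioi (1 / (n + 1 : ℝ))))
    ((countable_range _).insert _) ?_ ?_
  · rintro s (rfl | ⟨n, rfl⟩)
    · simp [hμ0]
    · exact (hμ_fin _ (by positivity)).lt_top
  · refine eq_univ_of_forall fun z => ?_
    rcases le_or_gt z 0 with hz | hz
    · exact ⟨Iic 0, mem_insert _ _, hz⟩
    · obtain ⟨n, hn⟩ := exists_nat_one_div_lt hz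
      exact ⟨_, mem_insert_of_mem _ ⟨n, rfl⟩, hn⟩

theorem integrableOn_Ioi_zero_of_le_rpow {g k : ℝ → ℝ} {β C : ℝ} (hβ : -1 < β)
    (hg : AEStronglyMeasurable g (volume.restrict (Ioi 0)))
    (hg0 : ∀ t ∈ Ioc 0 1, ‖g t‖ ≤ C * t ^ β) (hk : IntegrableOn k (Ioi 1))
    (hg1 : ∀ t ∈ Ioi 1, ‖g t‖ ≤ k t) : IntegrableOn g (Ioi 0) := by
  rw [← Ioc_union_Ioi_eq_Ioi zero_le_one]
  refine IntegrableOn.union ?_ ?_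
  · have hrpow : IntegrableOn (fun t : ℝ => t ^ β) (Ioc 0 1) :=
      (intervalIntegrable_iff_integrableOn_Ioc_of_le zero_le_one).1
        (intervalIntegral.intervalIntegrable_rpow' hβ)
    exact (hrpow.const_mul C).mono' (hg.mono_set Ioc_subset_Ioi_self)
      (ae_restrict_of_forall_mem measurableSet_Ioc hg0)
  · exact hk.mono' (hg.mono_set (Ioi_subset_Ioi zero_le_one))
      (ae_restrict_of_forall_mem measurableSet_Ioi hg1)

theorem integral_indicator_Ioo_zero_apply (μ : Measure ℝ) (g : ℝ → ℝ) (t : ℝ) :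
    ∫ y, (Ioo 0 y).indicator g t ∂μ = (Ioi 0).indicator (fun t => g t * μ.real (Ioi t)) t := by
  by_cases ht : 0 < t
  · have : (fun y => (Ioo 0 y).indicator g t) = (Ioi t).indicator fun _ => g t := by
      ext y; simp [indicator, ht]
    simp [this, integral_indicator_const _ measurableSet_Ioi, ht, mul_comm]
  · simp [indicator, ht]

theorem integrable_integral_Ioo_and_integral_eq (μ : Measure ℝ) [SFinite μ]
    (hμ_fin : ∀ t, 0 < t → μ (Ioi t) ≠ ∞) {h : ℝ → ℝ} (hh : Measurable h)
    (hint : IntegrableOn (fun t => h t * μ.real (Ioi t)) (Ioi 0)) :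
    Integrable (fun y => ∫ t in Ioo 0 y, h t) μ ∧
      ∫ y, (∫ t in Ioo 0 y, h t) ∂μ = ∫ t in Ioi 0, h t * μ.real (Ioi t) := by
  set F : ℝ → ℝ → ℝ := fun y t => (Ioo 0 y).indicator h t
  have hF_meas : Measurable (Function.uncurry F) := by
    have hS : MeasurableSet {p : ℝ × ℝ | 0 < p.2 ∧ p.2 < p.1} :=
      (measurableSet_lt measurable_const measurable_snd).inter
        (measurableSet_lt measurable_snd measurable_fst)
    exact (hh.comp measurable_snd).indicator hS
  have hF_fiber_integrable : ∀ t, Integrable (fun y => F y t) μ := by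
    intro t
    by_cases ht : 0 < t
    · have : (fun y => F y t) = (Ioi t).indicator fun _ => h t := by
        ext y; simp [F, indicator, ht]
      rw [this, integrable_indicator_iff measurableSet_Ioi]
      exact integrableOn_const (hμ_fin t ht)
    · simp [F, indicator, ht]
  have hF_int : Integrable (Function.uncurry F) (μ.prod volume) := by
    refine (integrable_prod_iff' hF_meas.aestronglyMeasurable).2
      ⟨ae_of_all _ hF_fiber_integrable, ?_⟩
    simp only [Function.uncurry_apply_pair, F, norm_indicator_eq_indicator_norm,
      integral_indicator_Ioo_zero_apply]
    refine (integrable_indicator_iff measurableSet_Ioi).2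
      (IntegrableOn.congr_fun hint.norm (fun t _ => ?_) measurableSet_Ioi)
    simp [abs_of_nonneg (measureReal_nonneg (μ := μ) (s := Ioi t))]
  refine ⟨hF_int.integral_prod_left.congr (ae_of_all _ fun y => ?_), ?_⟩
  · exact integral_indicator measurableSet_Ioo
  calc ∫ y, (∫ t in Ioo 0 y, h t) ∂μ = ∫ y, (∫ t, F y t) ∂μ := by
        simp_rw [F, integral_indicator measurableSet_Ioo]
    _ = ∫ t, ∫ y, F y t ∂μ := integral_integral_swap hF_int
    _ = ∫ t in Ioi 0, h t * μ.real (Ioi t) := by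
        simp_rw [F, integral_indicator_Ioo_zero_apply, integral_indicator measurableSet_Ioi]

theorem integrable_and_integral_eq_of_integral_Ioo_eq {μ : Measure ℝ} (hμ0 : μ (Iic 0) = 0)
    (hμ_fin : ∀ t, 0 < t → μ (Ioi t) ≠ ∞) {g h : ℝ → ℝ} (hh : Measurable h)
    (hint : IntegrableOn (fun t => h t * μ.real (Ioi t)) (Ioi 0))
    (hg : ∀ y, 0 < y → ∫ t in Ioo 0 y, h t = g y) :
    Integrable g μ ∧ ∫ y, g y ∂μ = ∫ t in Ioi 0, h t * μ.real (Ioi t) := by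
  have := sigmaFinite_of_measure_Iic_eq_zero hμ0 hμ_fin
  have hae : ∀ᵐ y ∂μ, ∫ t in Ioo 0 y, h t = g y :=
    measure_mono_null (fun y hy => not_lt.1 fun hy' => hy (hg y hy')) hμ0
  obtain ⟨hint', heq⟩ := integrable_integral_Ioo_and_integral_eq μ hμ_fin hh hint
  exact ⟨hint'.congr hae, (integral_congr_ae hae).symm.trans heq⟩

def tailMeasure (μ : Measure ℝ) : Measure ℝ :=
  (volume.restrict (Ioi 0)).withDensity fun t => μ (Ioi t)

theorem measurable_measure_Ioi (μ : Measure ℝ) : Measurable fun t => μ (Ioi t) :=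
  Antitone.measurable fun _ _ hab => measure_mono (Ioi_subset_Ioi hab)

theorem tailMeasure_Iic (μ : Measure ℝ) : tailMeasure μ (Iic 0) = 0 := by
  rw [tailMeasure, withDensity_apply _ measurableSet_Iic,
    Measure.restrict_restrict measurableSet_Iic,
    Iic_inter_Ioi, Ioc_self, Measure.restrict_empty, lintegral_zero_measure]

theorem tailMeasure_Ioi (μ : Measure ℝ) {s : ℝ} (hs : 0 ≤ s) :
    tailMeasure μ (Ioi s) = ∫⁻ t in Ioi s, μ (Ioi t) := by
  rw [tailMeasure, withDensity_apply _ measurableSet_Ioi,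
    Measure.restrict_restrict measurableSet_Ioi,
    inter_eq_left.2 (Ioi_subset_Ioi hs)]

theorem integral_tailMeasure {μ : Measure ℝ} (hμ_fin : ∀ t, 0 < t → μ (Ioi t) ≠ ∞) (g : ℝ → ℝ) :
    ∫ y, g y ∂tailMeasure μ = ∫ t in Ioi 0, g t * μ.real (Ioi t) := by
  rw [tailMeasure, integral_withDensity_eq_integral_toReal_smul (measurable_measure_Ioi μ)
    ((ae_restrict_iff' measurableSet_Ioi).2 (ae_of_all _ fun t ht => (hμ_fin t ht).lt_top))]
  simp only [smul_eq_mul, mul_comm, measureReal_def]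

theorem integrableOn_measureReal_Ioi {μ : Measure ℝ} {α M s : ℝ} (hα : 1 < α) (hs : 0 < s)
    (hμ_le : ∀ t, 0 < t → μ.real (Ioi t) ≤ M * t ^ (-α)) :
    IntegrableOn (fun t => μ.real (Ioi t)) (Ioi s) :=
  ((integrableOn_Ioi_rpow_of_lt (show -α < -1 by linarith) hs).const_mul M).mono'
    (measurable_measure_Ioi μ).ennreal_toReal.aestronglyMeasurable
    ((ae_restrict_iff' measurableSet_Ioi).2 (ae_of_all _ fun t ht => by
      rw [Real.norm_of_nonneg measureReal_nonneg]; exact hμ_le t (hs.trans ht)))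

theorem tailMeasure_Ioi_eq_ofReal {μ : Measure ℝ} {α M s : ℝ} (hα : 1 < α) (hs : 0 < s)
    (hμ_fin : ∀ t, 0 < t → μ (Ioi t) ≠ ∞) (hμ_le : ∀ t, 0 < t → μ.real (Ioi t) ≤ M * t ^ (-α)) :
    tailMeasure μ (Ioi s) = ENNReal.ofReal (∫ t in Ioi s, μ.real (Ioi t)) := by
  rw [tailMeasure_Ioi μ hs.le, ofReal_integral_eq_lintegral_ofReal
    (integrableOn_measureReal_Ioi hα hs hμ_le) (ae_of_all _ fun _ => measureReal_nonneg)]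
  exact setLIntegral_congr_fun measurableSet_Ioi fun t ht =>
    (ENNReal.ofReal_toReal (hμ_fin t (hs.trans ht))).symm

theorem tailMeasure_real_Ioi {μ : Measure ℝ} {α M s : ℝ} (hα : 1 < α) (hs : 0 < s)
    (hμ_fin : ∀ t, 0 < t → μ (Ioi t) ≠ ∞) (hμ_le : ∀ t, 0 < t → μ.real (Ioi t) ≤ M * t ^ (-α)) :
    (tailMeasure μ).real (Ioi s) = ∫ t in Ioi s, μ.real (Ioi t) := by
  rw [measureReal_def, tailMeasure_Ioi_eq_ofReal hα hs hμ_fin hμ_le,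
    ENNReal.toReal_ofReal (setIntegral_nonneg measurableSet_Ioi fun _ _ => measureReal_nonneg)]

theorem tailMeasure_real_Ioi_le {μ : Measure ℝ} {α M s : ℝ} (hα : 1 < α) (hs : 0 < s)
    (hμ_fin : ∀ t, 0 < t → μ (Ioi t) ≠ ∞) (hμ_le : ∀ t, 0 < t → μ.real (Ioi t) ≤ M * t ^ (-α)) :
    (tailMeasure μ).real (Ioi s) ≤ M / (α - 1) * s ^ (1 - α) := by
  have hrpow := integrableOn_Ioi_rpow_of_lt (show -α < -1 by linarith) hs
  calc (tailMeasure μ).real (Ioi s) = ∫ t in Ioi s, μ.real (Ioi t) :=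
        tailMeasure_real_Ioi hα hs hμ_fin hμ_le
    _ ≤ ∫ t in Ioi s, M * t ^ (-α) :=
        setIntegral_mono_on (integrableOn_measureReal_Ioi hα hs hμ_le) (hrpow.const_mul M)
          measurableSet_Ioi fun t ht => hμ_le t (hs.trans ht)
    _ = M / (α - 1) * s ^ (1 - α) := by
        have : 1 - α ≠ 0 := by linarith
        have : α - 1 ≠ 0 := by linarith
        rw [integral_const_mul, integral_Ioi_rpow_of_lt (by linarith) hs, neg_add_eq_sub]
        field_simp
        ring

theorem integrable_generator_and_integral_eq {μ : Measure ℝ} (hμ0 : μ (Iic 0) = 0)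
    (hμ_fin : ∀ t, 0 < t → μ (Ioi t) ≠ ∞) {α M : ℝ} (hα : α ∈ Ioo 1 2)
    (hμ_le : ∀ t, 0 < t → μ.real (Ioi t) ≤ M * t ^ (-α)) {f f' f'' : ℝ → ℝ}
    (hf : ∀ u, HasDerivAt f (f' u) u) (hf' : ∀ u, HasDerivAt f' (f'' u) u) {B₁ B₂ : ℝ}
    (hB₁ : ∀ u, ‖f' u‖ ≤ B₁) (hB₂ : ∀ u, ‖f'' u‖ ≤ B₂) (x : ℝ) :
    Integrable (fun y => f (x - y) - f x + y * f' x) μ ∧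
      IntegrableOn (fun t => (f' x - f' (x - t)) * μ.real (Ioi t)) (Ioi 0) ∧
      ∫ y, (f (x - y) - f x + y * f' x) ∂μ
        = ∫ t in Ioi 0, (f' x - f' (x - t)) * μ.real (Ioi t) := by
  have hf'c : Continuous f' := continuous_iff_continuousAt.2 fun u => (hf' u).continuousAt
  have hh : Continuous fun t => f' x - f' (x - t) := by fun_prop
  have hLip : ∀ t, 0 ≤ t → ‖f' x - f' (x - t)‖ ≤ B₂ * t := fun t ht => by
    simpa [abs_of_nonneg ht] using convex_univ.norm_image_sub_le_of_norm_hasDerivWithin_le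
      (fun u _ => (hf' u).hasDerivWithinAt) (fun u _ => hB₂ u) (mem_univ (x - t)) (mem_univ x)
  have hbdd : ∀ t, ‖f' x - f' (x - t)‖ ≤ 2 * B₁ := fun t =>
    (norm_sub_le _ _).trans (by linarith [hB₁ x, hB₁ (x - t)])
  have hint : IntegrableOn (fun t => (f' x - f' (x - t)) * μ.real (Ioi t)) (Ioi 0) := by
    refine integrableOn_Ioi_zero_of_le_rpow (β := 1 - α) (C := B₂ * M)
      (k := fun t => 2 * B₁ * M * t ^ (-α)) (by linarith [hα.2])
      (hh.measurable.mul (measurable_measure_Ioi μ).ennreal_toReal).aestronglyMeasurable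
      (fun t ht => ?_) ((integrableOn_Ioi_rpow_of_lt (by linarith [hα.1]) one_pos).const_mul _)
      (fun t ht => ?_)
    · calc ‖(f' x - f' (x - t)) * μ.real (Ioi t)‖
          ≤ (B₂ * t) * (M * t ^ (-α)) := by
            rw [norm_mul, Real.norm_of_nonneg measureReal_nonneg]
            exact mul_le_mul (hLip t ht.1.le) (hμ_le t ht.1) measureReal_nonneg
              ((norm_nonneg _).trans (hLip t ht.1.le))
        _ = B₂ * M * t ^ (1 - α) := by
            rw [sub_eq_add_neg, rpow_add ht.1, rpow_one]; ring
    · calc ‖(f' x - f' (x - t)) * μ.real (Ioi t)‖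
          ≤ (2 * B₁) * (M * t ^ (-α)) := by
            rw [norm_mul, Real.norm_of_nonneg measureReal_nonneg]
            exact mul_le_mul (hbdd t) (hμ_le t (zero_lt_one.trans ht)) measureReal_nonneg
              ((norm_nonneg _).trans (hbdd t))
        _ = 2 * B₁ * M * t ^ (-α) := by ring
  have hG : ∀ y, 0 < y → ∫ t in Ioo 0 y, (f' x - f' (x - t)) = f (x - y) - f x + y * f' x := by
    intro y hy
    have hF : ∀ u, HasDerivAt (fun u => u * f' x - f u) (f' x - f' u) u := fun u =>
      (((hasDerivAt_id' u).mul_const (f' x)).sub (hf u)).congr_deriv (by rw [one_mul])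
    rw [integral_Ioo_comp_sub_eq_sub hF (by fun_prop) x hy.le]
    ring
  obtain ⟨hGint, hGeq⟩ :=
    integrable_and_integral_eq_of_integral_Ioo_eq hμ0 hμ_fin hh.measurable hint hG
  exact ⟨hGint, hint, hGeq⟩

theorem integrableOn_and_integral_mul_tailMeasure_eq {μ : Measure ℝ}
    (hμ_fin : ∀ t, 0 < t → μ (Ioi t) ≠ ∞) {α M : ℝ} (hα : α ∈ Ioo 1 2)
    (hμ_le : ∀ t, 0 < t → μ.real (Ioi t) ≤ M * t ^ (-α)) {f' f'' : ℝ → ℝ}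
    (hf' : ∀ u, HasDerivAt f' (f'' u) u) (hf''c : Continuous f'') (hf''i : Integrable f'')
    {B₂ : ℝ} (hB₂ : ∀ u, ‖f'' u‖ ≤ B₂) (x : ℝ) :
    IntegrableOn (fun s => f'' (x - s) * (tailMeasure μ).real (Ioi s)) (Ioi 0) ∧
      ∫ t in Ioi 0, (f' x - f' (x - t)) * μ.real (Ioi t)
        = ∫ s in Ioi 0, f'' (x - s) * (tailMeasure μ).real (Ioi s) := by
  set ν := tailMeasure μ
  have hν_fin : ∀ s, 0 < s → ν (Ioi s) ≠ ∞ := fun s hs => by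
    rw [tailMeasure_Ioi_eq_ofReal hα.1 hs hμ_fin hμ_le]; exact ENNReal.ofReal_ne_top
  have hk : Continuous fun s => f'' (x - s) := by fun_prop
  have hint : IntegrableOn (fun s => f'' (x - s) * ν.real (Ioi s)) (Ioi 0) := by
    refine integrableOn_Ioi_zero_of_le_rpow (β := 1 - α) (C := B₂ * (M / (α - 1)))
      (k := fun s => ν.real (Ioi 1) * ‖f'' (x - s)‖) (by linarith [hα.2])
      (hk.measurable.mul (measurable_measure_Ioi ν).ennreal_toReal).aestronglyMeasurable
      (fun s hs => ?_)
      (((integrable_comp_sub_left f'' x).2 hf''i).norm.integrableOn.const_mul _)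
      (fun s hs => ?_)
    · rw [norm_mul, Real.norm_of_nonneg measureReal_nonneg, mul_assoc]
      exact mul_le_mul (hB₂ _) (tailMeasure_real_Ioi_le hα.1 hs.1 hμ_fin hμ_le)
        measureReal_nonneg ((norm_nonneg _).trans (hB₂ 0))
    · rw [norm_mul, Real.norm_of_nonneg measureReal_nonneg, mul_comm]
      exact mul_le_mul_of_nonneg_right
        (measureReal_mono (Ioi_subset_Ioi (le_of_lt hs)) (hν_fin 1 one_pos)) (norm_nonneg _)
  have hG : ∀ y, 0 < y → ∫ s in Ioo 0 y, f'' (x - s) = f' x - f' (x - y) :=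
    fun y hy => integral_Ioo_comp_sub_eq_sub hf' hf''c x hy.le
  obtain ⟨-, hGeq⟩ := integrable_and_integral_eq_of_integral_Ioo_eq (tailMeasure_Iic μ) hν_fin
    hk.measurable hint hG
  exact ⟨hint, (integral_tailMeasure hμ_fin _).symm.trans hGeq⟩

theorem stmt2_general (c α : ℝ) (hc : 1 < c) (hα : α ∈ Set.Ioo (1 : ℝ) 2)
    (θ : ℝ → ℝ) (hθ : IsAdmissible c α θ)
    (φ₁ : Measure ℝ)
    (hφ : ∀ r : ℝ, 0 < r → φ₁ (Set.Ioi r) = ENNReal.ofReal (r ^ (-α) * θ (Real.log r)))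
    (hφ0 : φ₁ (Set.Iic 0) = 0)
    (γ : ℝ → ℝ)
    (hγ : ∀ x : ℝ,
      γ x = Real.exp ((α - 1) * x) * ∫ y in Set.Ioi (Real.exp x), y ^ (-α) * θ (Real.log y))
    (f f' f'' : ℝ → ℝ)
    (hder1 : ∀ x, HasDerivAt f (f' x) x) (hder2 : ∀ x, HasDerivAt f' (f'' x) x)
    (hf' : MemC0L1 f') (hf'' : MemC0L1 f'') (x : ℝ) :
    Integrable (fun y => f (x - y) - f x + y * f' x) φ₁ ∧
    IntegrableOn (fun y => (f' x - f' (x - y)) * (y ^ (-α) * θ (Real.log y))) (Set.Ioi 0) volume ∧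
    IntegrableOn (fun y => f'' (x - y) * (y ^ (1 - α) * γ (Real.log y))) (Set.Ioi 0) volume ∧
    (∫ y, (f (x - y) - f x + y * f' x) ∂φ₁
      = ∫ y in Set.Ioi (0 : ℝ), (f' x - f' (x - y)) * (y ^ (-α) * θ (Real.log y))) ∧
    (∫ y, (f (x - y) - f x + y * f' x) ∂φ₁
      = ∫ y in Set.Ioi (0 : ℝ), f'' (x - y) * (y ^ (1 - α) * γ (Real.log y))) := by
  obtain ⟨M, hM⟩ := hθ.exists_le hc (by linarith [hα.1])
  obtain ⟨B₁, hB₁⟩ := exists_norm_le_of_tendsto_cocompact hf'.1 hf'.2.1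
  obtain ⟨B₂, hB₂⟩ := exists_norm_le_of_tendsto_cocompact hf''.1 hf''.2.1
  have hfin : ∀ t, 0 < t → φ₁ (Ioi t) ≠ ∞ := fun t ht => by
    rw [hφ t ht]; exact ENNReal.ofReal_ne_top
  have htail : ∀ t, 0 < t → φ₁.real (Ioi t) = t ^ (-α) * θ (log t) := fun t ht => by
    rw [measureReal_def, hφ t ht, ENNReal.toReal_ofReal (by positivity [hθ.1 (log t)])]
  have hle : ∀ t, 0 < t → φ₁.real (Ioi t) ≤ M * t ^ (-α) := fun t ht => by
    rw [htail t ht, mul_comm M]; gcongr; exact hM _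
  have hγ_tail : ∀ s, 0 < s → s ^ (1 - α) * γ (log s) = (tailMeasure φ₁).real (Ioi s) := by
    intro s hs
    rw [hγ, exp_log hs, tailMeasure_real_Ioi hα.1 hs hfin hle,
      setIntegral_congr_fun measurableSet_Ioi fun t ht => htail t (hs.trans ht),
      mul_comm (α - 1), ← rpow_def_of_pos hs, ← mul_assoc, ← rpow_add hs]
    simp
  obtain ⟨hgen, hint₁, heq₁⟩ :=
    integrable_generator_and_integral_eq hφ0 hfin hα hle hder1 hder2 hB₁ hB₂ x
  obtain ⟨hint₂, heq₂⟩ :=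
    integrableOn_and_integral_mul_tailMeasure_eq hfin hα hle hder2 hf''.1 hf''.2.2 hB₂ x
  have h₁ : EqOn (fun t => (f' x - f' (x - t)) * φ₁.real (Ioi t))
      (fun y => (f' x - f' (x - y)) * (y ^ (-α) * θ (log y))) (Ioi 0) :=
    fun t ht => by simp only [htail t ht]
  have h₂ : EqOn (fun s => f'' (x - s) * (tailMeasure φ₁).real (Ioi s))
      (fun y => f'' (x - y) * (y ^ (1 - α) * γ (log y))) (Ioi 0) :=
    fun s hs => by simp only [hγ_tail s hs]
  refine ⟨hgen, hint₁.congr_fun h₁ measurableSet_Ioi, hint₂.congr_fun h₂ measurableSet_Ioi,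
    heq₁.trans (setIntegral_congr_fun measurableSet_Ioi h₁), ?_⟩
  rw [heq₁, heq₂, setIntegral_congr_fun measurableSet_Ioi h₂]

theorem stmt2 (c α : ℝ) (hc : 1 < c) (hα : α ∈ Set.Ioo (1 : ℝ) 2)
    (θ : ℝ → ℝ) (hθ : IsAdmissible c α θ)
    (φ₁ : Measure ℝ)
    (hφ : ∀ r : ℝ, 0 < r → φ₁ (Set.Ioi r) = ENNReal.ofReal (r ^ (-α) * θ (Real.log r)))
    (hφ0 : φ₁ (Set.Iic 0) = 0)
    (γ : ℝ → ℝ)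
    (hγ : ∀ x : ℝ,
      γ x = Real.exp ((α - 1) * x) * ∫ y in Set.Ioi (Real.exp x), y ^ (-α) * θ (Real.log y))
    (f f' f'' : ℝ → ℝ)
    (hder1 : ∀ x, HasDerivAt f (f' x) x) (hder2 : ∀ x, HasDerivAt f' (f'' x) x)
    (hf : MemC0L1 f) (hf' : MemC0L1 f') (hf'' : MemC0L1 f'') (x : ℝ) :
    Integrable (fun y => f (x - y) - f x + y * f' x) φ₁ ∧
    IntegrableOn (fun y => (f' x - f' (x - y)) * (y ^ (-α) * θ (Real.log y))) (Set.Ioi 0) volume ∧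
    IntegrableOn (fun y => f'' (x - y) * (y ^ (1 - α) * γ (Real.log y))) (Set.Ioi 0) volume ∧
    (∫ y, (f (x - y) - f x + y * f' x) ∂φ₁
      = ∫ y in Set.Ioi (0 : ℝ), (f' x - f' (x - y)) * (y ^ (-α) * θ (Real.log y))) ∧
    (∫ y, (f (x - y) - f x + y * f' x) ∂φ₁
      = ∫ y in Set.Ioi (0 : ℝ), f'' (x - y) * (y ^ (1 - α) * γ (Real.log y))) :=
  stmt2_general c α hc hα θ hθ φ₁ hφ hφ0 γ hγ f f' f'' hder1 hder2 hf' hf'' x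
end
end

section
/- Let c > 1, α ∈ (1,2), and let θ be a smooth admissible function with respect to c and α with Fourier coefficients (c_k)_{k∈ℤ} and c̃ = 2πα/log c. Then the function γ(x) := e^{(α−1)x} ∫_{e^x}^∞ y^{−α} θ(log y) dy is continuously differentiable on ℝ and has the absolutely convergent Fourier series representation γ(x) = ∑_{k∈ℤ} (c_k/(α − 1 − i k c̃)) e^{i k c̃ x} for all x ∈ ℝ. -/
/-!
Substituting `y = exp u` turns `γ x` into `exp ((α - 1) x) * ∫_x^∞ exp (-(α - 1) u) θ u du`.
Since `∑ ‖c_k‖ < ∞` and `α > 1`, the Fourier series of `θ` can be integrated term by term against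
this exponential weight, and the `k`-th term contributes `c_k exp (i k c̃ x) / (α - 1 - i k c̃)`.
Because `Re (α - 1 - i k c̃) = α - 1 > 0`, these coefficients are `O(‖c_k‖)` even after
multiplication by the frequency `i k c̃`, so the series can be differentiated term by term.
-/

open MeasureTheory Real Filter Set Complex

noncomputable section

def IsSmoothAdmissible (c α : ℝ) (θ : ℝ → ℝ) (cfs : ℤ → ℂ) : Prop :=
  IsAdmissible c α θ ∧ Continuous θ ∧
  (∀ k : ℤ, cfs (-k) = starRingEnd ℂ (cfs k)) ∧
  (∃ C > 0, ∀ k : ℤ, k ≠ 0 → ‖cfs k‖ ≤ C / (k : ℝ) ^ 2) ∧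
  Summable (fun k : ℤ => ‖cfs k‖) ∧
  ∀ x : ℝ, HasSum
    (fun k : ℤ => cfs k * Complex.exp (Complex.I * (k : ℂ) * ((2 * Real.pi * α / Real.log c : ℝ) : ℂ) * (x : ℂ)))
    ((θ x : ℂ))

theorem integral_Ioi_exp_rpow_neg_mul_comp_log (g : ℝ → ℝ) (α x : ℝ) :
    ∫ y in Ioi (rexp x), y ^ (-α) * g (Real.log y) = ∫ u in Ioi x, rexp ((1 - α) * u) * g u := by
  rw [← integral_comp_exp_Ioi]
  refine setIntegral_congr_fun measurableSet_Ioi fun u _ => ?_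
  rw [smul_eq_mul, Real.log_exp, ← Real.exp_mul, ← mul_assoc, ← Real.exp_add]
  ring_nf

section ExponentialSeries

variable {ι : Type*} {a ω : ι → ℂ} {s ω₀ : ℂ}

theorem norm_cexp_mul_ofReal_eq_one (hω₀ : ω₀.re = 0) (x : ℝ) : ‖cexp (ω₀ * x)‖ = 1 := by
  simp [Complex.norm_exp, hω₀]

theorem re_le_norm_sub (hω₀ : ω₀.re = 0) : s.re ≤ ‖s - ω₀‖ := by
  simpa [hω₀] using Complex.re_le_norm (s - ω₀)

theorem norm_div_sub_mul_cexp_le (hs : 0 < s.re) (hω₀ : ω₀.re = 0) (b : ℂ) (x : ℝ) :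
    ‖b / (s - ω₀) * cexp (ω₀ * x)‖ ≤ ‖b‖ / s.re := by
  rw [norm_mul, norm_cexp_mul_ofReal_eq_one hω₀, mul_one, norm_div]
  gcongr
  exact re_le_norm_sub hω₀

theorem norm_div_sub_le (hs : 0 < s.re) (hω₀ : ω₀.re = 0) : ‖ω₀ / (s - ω₀)‖ ≤ ‖s‖ / s.re + 1 := by
  have hne : s - ω₀ ≠ 0 := norm_pos_iff.mp (hs.trans_le (re_le_norm_sub hω₀))
  calc ‖ω₀ / (s - ω₀)‖ = ‖s / (s - ω₀) - 1‖ := by rw [div_sub_one hne, sub_sub_cancel]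
    _ ≤ ‖s‖ / ‖s - ω₀‖ + 1 := by simpa [norm_div] using norm_sub_le (s / (s - ω₀)) 1
    _ ≤ ‖s‖ / s.re + 1 := by gcongr; exact re_le_norm_sub hω₀

theorem summable_norm_div_sub_mul_cexp (hs : 0 < s.re) (hω : ∀ k, (ω k).re = 0)
    (ha : Summable fun k => ‖a k‖) (x : ℝ) :
    Summable fun k => ‖a k / (s - ω k) * cexp (ω k * x)‖ :=
  (ha.div_const s.re).of_nonneg_of_le (fun _ => norm_nonneg _)
    fun k => norm_div_sub_mul_cexp_le hs (hω k) (a k) x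

theorem contDiff_one_tsum {𝕜 F : Type*} [NontriviallyNormedField 𝕜] [IsRCLikeNormedField 𝕜]
    [NormedAddCommGroup F] [NormedSpace 𝕜 F] [CompleteSpace F] {g g' : ι → 𝕜 → F}
    {u : ι → ℝ} {y₀ : 𝕜} (hu : Summable u) (hg : ∀ n y, HasDerivAt (g n) (g' n y) y)
    (hg'_cont : ∀ n, Continuous (g' n)) (hg' : ∀ n y, ‖g' n y‖ ≤ u n)
    (hg₀ : Summable fun n => g n y₀) :
    ContDiff 𝕜 1 fun y => ∑' n, g n y := by
  have hderiv y := hasDerivAt_tsum hu hg hg' hg₀ y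
  rw [contDiff_one_iff_deriv]
  refine ⟨fun y => (hderiv y).differentiableAt, ?_⟩
  rw [funext fun y => (hderiv y).deriv]
  exact continuous_tsum hg'_cont hu hg'

theorem contDiff_tsum_div_sub_mul_cexp (hs : 0 < s.re) (hω : ∀ k, (ω k).re = 0)
    (ha : Summable fun k => ‖a k‖) :
    ContDiff ℝ 1 fun x : ℝ => ∑' k, a k / (s - ω k) * cexp (ω k * x) := by
  have hderiv k (y : ℝ) : HasDerivAt (fun x : ℝ => a k / (s - ω k) * cexp (ω k * x))
      (a k / (s - ω k) * (cexp (ω k * y) * ω k)) y :=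
    (((hasDerivAt_id (y : ℂ)).const_mul (ω k)).cexp.comp_ofReal.const_mul _).congr_deriv
      (by simp)
  refine contDiff_one_tsum (ha.mul_right (‖s‖ / s.re + 1)) hderiv (fun k => by fun_prop)
    (fun k y => ?_) ((summable_norm_div_sub_mul_cexp hs hω ha 0).of_norm)
  rw [norm_mul, norm_mul, norm_cexp_mul_ofReal_eq_one (hω k), one_mul, norm_div, div_mul_eq_mul_div,
    mul_div_assoc, ← norm_div]
  gcongr
  exact norm_div_sub_le hs (hω k)

theorem hasSum_integral_Ioi_cexp_mul [Countable ι] {f : ℝ → ℂ} (hs : 0 < s.re)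
    (hω : ∀ k, (ω k).re = 0) (ha : Summable fun k => ‖a k‖)
    (hf : ∀ u : ℝ, HasSum (fun k => a k * cexp (ω k * u)) (f u)) (x : ℝ) :
    HasSum (fun k => a k * cexp ((ω k - s) * x) / (s - ω k))
      (∫ u in Ioi x, cexp (-s * u) * f u) := by
  have hre k : (ω k - s).re < 0 := by simp [hω k, hs]
  have hint k : IntegrableOn (fun u : ℝ => a k * cexp ((ω k - s) * u)) (Ioi x) :=
    (integrableOn_exp_mul_complex_Ioi (hre k) x).const_mul (a k)
  have hnorm k : ∫ u in Ioi x, ‖a k * cexp ((ω k - s) * u)‖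
      = ‖a k‖ * ∫ u in Ioi x, rexp (-s.re * u) := by
    simp [← integral_const_mul, Complex.norm_exp, hω k]
  have hterms := hasSum_integral_of_summable_integral_norm hint
    (by simpa only [hnorm] using ha.mul_right _)
  have hpointwise (u : ℝ) : ∑' k, a k * cexp ((ω k - s) * u) = cexp (-s * u) * f u := by
    rw [← ((hf u).mul_left (cexp (-s * u))).tsum_eq]
    congr 1 with k
    rw [sub_eq_neg_add, add_mul, Complex.exp_add]
    ring
  simp only [hpointwise] at hterms
  refine hterms.congr_fun fun k => ?_
  rw [integral_const_mul, integral_exp_mul_complex_Ioi (hre k), neg_div, ← div_neg, neg_sub,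
    mul_div_assoc]

theorem hasSum_div_sub_mul_cexp [Countable ι] {f : ℝ → ℂ} (hs : 0 < s.re)
    (hω : ∀ k, (ω k).re = 0) (ha : Summable fun k => ‖a k‖)
    (hf : ∀ u : ℝ, HasSum (fun k => a k * cexp (ω k * u)) (f u)) (x : ℝ) :
    HasSum (fun k => a k / (s - ω k) * cexp (ω k * x))
      (cexp (s * x) * ∫ u in Ioi x, cexp (-s * u) * f u) := by
  refine ((hasSum_integral_Ioi_cexp_mul hs hω ha hf x).mul_left _).congr_fun fun k => ?_
  rw [show ω k * x = s * x + (ω k - s) * x by ring, Complex.exp_add]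
  ring

end ExponentialSeries

theorem ofReal_exp_mul_integral_Ioi (g : ℝ → ℝ) (σ x : ℝ) :
    ((rexp (σ * x) * ∫ u in Ioi x, rexp (-σ * u) * g u : ℝ) : ℂ)
      = cexp (σ * x) * ∫ u in Ioi x, cexp (-σ * u) * g u := by
  rw [Complex.ofReal_mul, ← integral_complex_ofReal]
  push_cast
  rfl

theorem stmt6_general (c α : ℝ) (hα : α ∈ Set.Ioo (1 : ℝ) 2)
    (θ : ℝ → ℝ) (cfs : ℤ → ℂ) (hθ : IsSmoothAdmissible c α θ cfs)
    (ctil : ℝ) (hctil : ctil = 2 * Real.pi * α / Real.log c)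
    (γ : ℝ → ℝ)
    (hγ : ∀ x : ℝ,
      γ x = Real.exp ((α - 1) * x) * ∫ y in Set.Ioi (Real.exp x), y ^ (-α) * θ (Real.log y)) :
    ContDiff ℝ 1 γ ∧
    (∀ x : ℝ,
      Summable (fun k : ℤ =>
        ‖(cfs k / ((α : ℂ) - 1 - Complex.I * (k : ℂ) * (ctil : ℂ))) *
          Complex.exp (Complex.I * (k : ℂ) * (ctil : ℂ) * (x : ℂ))‖) ∧
      HasSum
        (fun k : ℤ => (cfs k / ((α : ℂ) - 1 - Complex.I * (k : ℂ) * (ctil : ℂ))) *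
          Complex.exp (Complex.I * (k : ℂ) * (ctil : ℂ) * (x : ℂ)))
        ((γ x : ℂ))) := by
  obtain ⟨-, -, -, -, hsum, hfourier⟩ := hθ
  rw [← hctil] at hfourier
  have hs : 0 < ((α : ℂ) - 1).re := by simpa using hα.1
  have hω (k : ℤ) : (I * k * ctil).re = 0 := by simp
  have hγ_sum (x : ℝ) : HasSum (fun k : ℤ => cfs k / ((α : ℂ) - 1 - I * k * ctil) *
      cexp (I * k * ctil * x)) (γ x) := by
    rw [hγ, integral_Ioi_exp_rpow_neg_mul_comp_log, show 1 - α = -(α - 1) by ring,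
      ofReal_exp_mul_integral_Ioi]
    push_cast
    exact hasSum_div_sub_mul_cexp (ω := fun k : ℤ => I * k * ctil) hs hω hsum hfourier x
  refine ⟨?_, fun x => ⟨summable_norm_div_sub_mul_cexp (ω := fun k : ℤ => I * k * ctil) hs hω
    hsum x, hγ_sum x⟩⟩
  have hγ_re : γ = fun x : ℝ => reCLM (∑' k : ℤ, cfs k / ((α : ℂ) - 1 - I * k * ctil) *
      cexp (I * k * ctil * x)) :=
    funext fun x => by simp [(hγ_sum x).tsum_eq]
  rw [hγ_re]
  exact reCLM.contDiff.comp
    (contDiff_tsum_div_sub_mul_cexp (ω := fun k : ℤ => I * k * ctil) hs hω hsum)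

theorem stmt6 (c α : ℝ) (hc : 1 < c) (hα : α ∈ Set.Ioo (1 : ℝ) 2)
    (θ : ℝ → ℝ) (cfs : ℤ → ℂ) (hθ : IsSmoothAdmissible c α θ cfs)
    (ctil : ℝ) (hctil : ctil = 2 * Real.pi * α / Real.log c)
    (γ : ℝ → ℝ)
    (hγ : ∀ x : ℝ,
      γ x = Real.exp ((α - 1) * x) * ∫ y in Set.Ioi (Real.exp x), y ^ (-α) * θ (Real.log y)) :
    ContDiff ℝ 1 γ ∧
    (∀ x : ℝ,
      Summable (fun k : ℤ =>
        ‖(cfs k / ((α : ℂ) - 1 - Complex.I * (k : ℂ) * (ctil : ℂ))) *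
          Complex.exp (Complex.I * (k : ℂ) * (ctil : ℂ) * (x : ℂ))‖) ∧
      HasSum
        (fun k : ℤ => (cfs k / ((α : ℂ) - 1 - Complex.I * (k : ℂ) * (ctil : ℂ))) *
          Complex.exp (Complex.I * (k : ℂ) * (ctil : ℂ) * (x : ℂ)))
        ((γ x : ℂ))) :=
  stmt6_general c α hα θ cfs hθ ctil hctil γ hγ
end
end

section
/- For every real x ≠ 0 one has lim_{α → 1, α ∈ (0,2)\{1}} Γ(1−α) ( (−ix)^α + ix·cos( (π/2)(1−α) ) ) = ix·log(−ix), where Γ is the complex Gamma function and complex powers and logarithms are taken with the principal branch. -/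
/-!
Since `Γ(1 - w)` has a simple pole at `w = 1` with residue `-1`, the product `Γ(1 - w) f(w)`
tends to `-f'(1)` for any `f` differentiable at `1` with `f(1) = 0`. Writing `z = -ix`, the
bracket is `f(w) = z ^ w - z cos(π/2 (1 - w))`, which vanishes at `1` and has derivative
`z log z` there, the cosine contributing nothing because `sin 0 = 0`.
-/

open Real Filter Set Complex

noncomputable section

open Topology

namespace Complex

theorem tendsto_one_sub_mul_Gamma_one_sub :
    Tendsto (fun w : ℂ => (1 - w) * Gamma (1 - w)) (𝓝[≠] 1) (𝓝 1) := by
  refine tendsto_self_mul_Gamma_nhds_zero.comp ?_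
  refine tendsto_nhdsWithin_of_tendsto_nhds_of_eventually_within _ ?_ ?_
  · exact tendsto_nhdsWithin_of_tendsto_nhds
      (by simpa using (continuous_sub_left (1 : ℂ)).tendsto 1)
  · filter_upwards [self_mem_nhdsWithin] with w hw
    exact sub_ne_zero.mpr (Ne.symm hw)

theorem tendsto_Gamma_one_sub_mul_of_hasDerivAt {f : ℂ → ℂ} {f' : ℂ} (hf : HasDerivAt f f' 1)
    (hf1 : f 1 = 0) :
    Tendsto (fun w => Gamma (1 - w) * f w) (𝓝[≠] 1) (𝓝 (-f')) := by
  have hlim := (tendsto_one_sub_mul_Gamma_one_sub.mul (hasDerivAt_iff_tendsto_slope.mp hf)).neg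
  rw [one_mul] at hlim
  refine hlim.congr' ?_
  filter_upwards [self_mem_nhdsWithin] with w hw
  have hw' : w - 1 ≠ 0 := sub_ne_zero.mpr hw
  rw [slope_def_field, hf1]
  field_simp
  ring

theorem hasDerivAt_cpow_sub_mul_cos (z : ℂ) :
    HasDerivAt (fun w : ℂ => z ^ w - z * cos (π / 2 * (1 - w))) (z * log z) 1 := by
  have hpow : HasDerivAt (fun w : ℂ => z ^ w) (z * log z) 1 := by
    simpa using (hasDerivAt_id (1 : ℂ)).const_cpow (Or.inr one_ne_zero)
  have hcos : HasDerivAt (fun w : ℂ => z * cos (π / 2 * (1 - w))) 0 1 := by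
    simpa using (((hasDerivAt_id (1 : ℂ)).const_sub 1).const_mul (π / 2 : ℂ)).ccos.const_mul z
  exact (hpow.sub hcos).congr_deriv (sub_zero _)

end Complex

theorem stmt11_general (x : ℝ) :
    Tendsto
      (fun α : ℝ =>
        Complex.Gamma (1 - (α : ℂ)) *
          ((-Complex.I * (x : ℂ)) ^ ((α : ℝ) : ℂ)
            + Complex.I * (x : ℂ) * Complex.cos ((Real.pi : ℂ) / 2 * (1 - (α : ℂ)))))
      (nhdsWithin 1 (Set.Ioo (0 : ℝ) 2 \ {1}))
      (nhds (Complex.I * (x : ℂ) * Complex.log (-Complex.I * (x : ℂ)))) := by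
  set z : ℂ := -Complex.I * x
  have hIx : Complex.I * x = -z := by simp [z]
  have hlim := Complex.tendsto_Gamma_one_sub_mul_of_hasDerivAt
    (Complex.hasDerivAt_cpow_sub_mul_cos z) (by simp)
  have hofReal : Tendsto ((↑) : ℝ → ℂ) (𝓝[Ioo 0 2 \ {1}] 1) (𝓝[≠] 1) := by
    refine tendsto_nhdsWithin_of_tendsto_nhds_of_eventually_within _
      (Complex.continuous_ofReal.continuousWithinAt.tendsto.trans (by simp)) ?_
    filter_upwards [self_mem_nhdsWithin] with α hα
    simpa using hα.2
  rw [hIx]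
  simpa [Function.comp_def, sub_eq_add_neg] using hlim.comp hofReal

theorem stmt11 (x : ℝ) (hx : x ≠ 0) :
    Tendsto
      (fun α : ℝ =>
        Complex.Gamma (1 - (α : ℂ)) *
          ((-Complex.I * (x : ℂ)) ^ ((α : ℝ) : ℂ)
            + Complex.I * (x : ℂ) * Complex.cos ((Real.pi : ℂ) / 2 * (1 - (α : ℂ)))))
      (nhdsWithin 1 (Set.Ioo (0 : ℝ) 2 \ {1}))
      (nhds (Complex.I * (x : ℂ) * Complex.log (-Complex.I * (x : ℂ)))) :=
  stmt11_general x
end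
end

section
/- Let c > 1, α ∈ (0,2)\{1}, and let θ be a smooth admissible function with respect to c and α with Fourier coefficients (c_k)_{k∈ℤ} and c̃ = 2πα/log c. Let f : ℝ → ℝ be bounded and let h > 0. Then the double series ₕΔ^α_{c,θ} f(x) := ∑_{k∈ℤ} ω_k h^{i k c̃ − α} ∑_{j=0}^∞ C(α − i k c̃, j) (−1)^j f(x − jh) converges absolutely for every x ∈ ℝ, and its value is a real number. -/
open MeasureTheory Real Filter Set Complex

noncomputable section

/-- Generalized binomial coefficient `C(z,j) = z(z-1)⋯(z-j+1)/j!`. -/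
def gbinom (z : ℂ) (j : ℕ) : ℂ := (∏ i ∈ Finset.range j, (z - (i : ℂ))) / (j.factorial : ℂ)

/-!
Write `z_k = α - i k c̃`. The identity `Γ(1 - z) C(z, j) = (-1)^j (-z) Γ(j - z) / j!` bounds the
`(k, j)`-term by `M h^{-α} |c_k| |z_k| |Γ(j - z_k)| / j!`. Splitting the `j`-sum at
`m ≈ |Im z_k|`, the head is controlled by `|Γ(w)| (Im w)^2 ≤ Γ(Re w + 2)` and the tail by
`|Γ(w)| ≤ Γ(Re w)` and a telescoping sum of Gamma quotients; log-convexity of `Γ` then gives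
`|z_k| ∑_j |Γ(j - z_k)| / j! = O(1 + |k|^{1-α})`, which is summable against `|c_k| = O(k^{-2})`.
The value is real since `c_{-k} = conj c_k` makes the `k`-th and `(-k)`-th terms conjugate.
-/

open ComplexConjugate

namespace Real

theorem Gamma_add_le_mul_rpow {x s : ℝ} (hx : 0 < x) (hs0 : 0 ≤ s) (hs1 : s ≤ 1) :
    Real.Gamma (x + s) ≤ Real.Gamma x * x ^ s := by
  have hGx := Real.Gamma_pos_of_pos hx
  have hconv := convexOn_log_Gamma.2 (mem_Ioi.mpr hx) (mem_Ioi.mpr (by linarith : 0 < x + 1))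
    (by linarith : 0 ≤ 1 - s) hs0 (by ring)
  simp only [Function.comp, smul_eq_mul, Real.Gamma_add_one hx.ne',
    Real.log_mul hx.ne' hGx.ne', show (1 - s) * x + s * (x + 1) = x + s by ring] at hconv
  rw [← Real.log_le_log_iff (Real.Gamma_pos_of_pos (by linarith)) (by positivity),
    Real.log_mul hGx.ne' (by positivity), Real.log_rpow hx]
  linarith

theorem Gamma_add_le_mul_add_one_rpow {x s : ℝ} (hx : 0 < x) (hs0 : 0 ≤ s) (hs2 : s ≤ 2) :
    Real.Gamma (x + s) ≤ Real.Gamma x * (x + 1) ^ s := by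
  rcases le_total s 1 with hs1 | hs1
  · calc Real.Gamma (x + s) ≤ Real.Gamma x * x ^ s := Gamma_add_le_mul_rpow hx hs0 hs1
      _ ≤ Real.Gamma x * (x + 1) ^ s := by gcongr; linarith
  · calc Real.Gamma (x + s) = (x + (s - 1)) * Real.Gamma (x + (s - 1)) := by
          rw [← Real.Gamma_add_one (by linarith)]; ring_nf
      _ ≤ (x + 1) * (Real.Gamma x * (x + 1) ^ (s - 1)) := by
          gcongr
          · linarith
          · exact (Gamma_add_le_mul_rpow hx (by linarith) (by linarith)).trans
              (by gcongr; linarith)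
      _ = Real.Gamma x * (x + 1) ^ s := by
          rw [Real.rpow_sub_one (by linarith)]; field_simp

theorem Gamma_add_two_sub_le {y a : ℝ} (hy : 1 ≤ y) (ha0 : 0 ≤ a) (ha2 : a ≤ 2) :
    Real.Gamma (y + 2 - a) ≤ 2 * (y + 1) ^ (-a) * Real.Gamma (y + 2) := by
  have hGy2 : Real.Gamma (y + 2) = (y + 1) * (y * Real.Gamma y) := by
    rw [← Real.Gamma_add_one (by linarith), ← Real.Gamma_add_one (by linarith)]; ring_nf
  have hpow : (y + 1) ^ (2 - a) = (y + 1) ^ 2 * (y + 1) ^ (-a) := by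
    rw [sub_eq_add_neg, Real.rpow_add (by linarith), Real.rpow_two]
  calc Real.Gamma (y + 2 - a) = Real.Gamma (y + (2 - a)) := by ring_nf
    _ ≤ Real.Gamma y * (y + 1) ^ (2 - a) :=
        Gamma_add_le_mul_add_one_rpow (by linarith) (by linarith) (by linarith)
    _ = (y + 1) * (y + 1) * (y + 1) ^ (-a) * Real.Gamma y := by rw [hpow]; ring
    _ ≤ (y + 1) * (2 * y) * (y + 1) ^ (-a) * Real.Gamma y := by gcongr; linarith
    _ = 2 * (y + 1) ^ (-a) * Real.Gamma (y + 2) := by rw [hGy2]; ring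

theorem sum_range_Gamma_add_sub_div_le {a x : ℝ} (ha : 0 < a) (hax : a < x) (n : ℕ) :
    ∑ j ∈ Finset.range n, Real.Gamma (j + x - a) / Real.Gamma (j + x + 1) ≤
      Real.Gamma (x - a) / (a * Real.Gamma x) := by
  set u : ℕ → ℝ := fun j => Real.Gamma (j + x - a) / Real.Gamma (j + x)
  have hpos (j : ℕ) : 0 < (j : ℝ) + x - a := by linarith [(Nat.cast_nonneg j : (0 : ℝ) ≤ j)]
  have hstep (j : ℕ) :
      Real.Gamma (j + x - a) / Real.Gamma (j + x + 1) = (u j - u (j + 1)) / a := by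
    have h1 : Real.Gamma ((j + 1 : ℕ) + x - a) = (j + x - a) * Real.Gamma (j + x - a) := by
      rw [← Real.Gamma_add_one (hpos j).ne']; push_cast; ring_nf
    have h2 : Real.Gamma ((j + 1 : ℕ) + x) = (j + x) * Real.Gamma (j + x) := by
      rw [← Real.Gamma_add_one (by linarith [hpos j])]; push_cast; ring_nf
    have h3 : Real.Gamma (j + x + 1) = (j + x) * Real.Gamma (j + x) :=
      Real.Gamma_add_one (by linarith [hpos j])
    have : Real.Gamma (j + x) ≠ 0 := (Real.Gamma_pos_of_pos (by linarith [hpos j])).ne'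
    have : (j : ℝ) + x ≠ 0 := by linarith [hpos j]
    simp only [u, h1, h2, h3]
    field_simp
    ring
  have hsum : ∑ j ∈ Finset.range n, Real.Gamma (j + x - a) / Real.Gamma (j + x + 1) =
      (u 0 - u n) / a := by
    simp only [hstep, ← Finset.sum_div, Finset.sum_range_sub']
  have hun : 0 ≤ u n :=
    div_nonneg (Real.Gamma_pos_of_pos (hpos n)).le (Real.Gamma_pos_of_pos (by linarith [hpos n])).le
  rw [hsum]
  calc (u 0 - u n) / a ≤ u 0 / a := by gcongr; linarith
    _ = Real.Gamma (x - a) / (a * Real.Gamma x) := by simp [u, div_div, mul_comm]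

theorem Gamma_add_sub_div_nonneg {a x : ℝ} (ha : 0 < a) (hax : a < x) (j : ℕ) :
    0 ≤ Real.Gamma (j + x - a) / Real.Gamma (j + x + 1) :=
  have hj : (0 : ℝ) ≤ j := Nat.cast_nonneg j
  div_nonneg (Gamma_nonneg_of_nonneg (by linarith)) (Gamma_nonneg_of_nonneg (by linarith))

theorem summable_Gamma_add_sub_div {a x : ℝ} (ha : 0 < a) (hax : a < x) :
    Summable (fun j : ℕ => Real.Gamma (j + x - a) / Real.Gamma (j + x + 1)) :=
  summable_of_sum_range_le (Gamma_add_sub_div_nonneg ha hax) (sum_range_Gamma_add_sub_div_le ha hax)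

theorem tsum_Gamma_add_sub_div_le {a x : ℝ} (ha : 0 < a) (hax : a < x) :
    ∑' j : ℕ, Real.Gamma (j + x - a) / Real.Gamma (j + x + 1) ≤
      Real.Gamma (x - a) / (a * Real.Gamma x) :=
  Real.tsum_le_of_sum_range_le (Gamma_add_sub_div_nonneg ha hax)
    (sum_range_Gamma_add_sub_div_le ha hax)

theorem rpow_le_one_add_rpow {x y : ℝ} (hx : 1 ≤ x) (hxy : x ≤ y) (p : ℝ) :
    x ^ p ≤ 1 + y ^ p := by
  have hy : 0 ≤ y ^ p := Real.rpow_nonneg (by linarith) p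
  rcases le_total 0 p with hp | hp
  · linarith [Real.rpow_le_rpow (by linarith) hxy hp]
  · linarith [Real.rpow_le_one_of_one_le_of_nonpos hx hp]

theorem Gamma_nat_add_two_sub_div_factorial_le {a y : ℝ} (ha0 : 0 ≤ a) (ha2 : a ≤ 2) {j : ℕ}
    (hjy : (j : ℝ) + 1 ≤ y) :
    Real.Gamma (j + 2 - a) / j.factorial ≤ Real.Gamma (2 - a) + 2 * (1 + y ^ (1 - a)) := by
  have hy : 0 ≤ y ^ (1 - a) :=
    Real.rpow_nonneg (by linarith [(Nat.cast_nonneg j : (0 : ℝ) ≤ j)]) _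
  rcases j with _ | i
  · simp; linarith
  have hi : (1 : ℝ) ≤ i + 1 := by linarith [(Nat.cast_nonneg i : (0 : ℝ) ≤ i)]
  have hfac : Real.Gamma ((i + 1 : ℝ) + 2) = (i + 2) * (i + 1).factorial := by
    rw [show (i + 1 : ℝ) + 2 = (i + 2 : ℕ) + 1 by push_cast; ring, Real.Gamma_nat_eq_factorial,
      Nat.factorial_succ]
    push_cast; ring
  have hpow : ((i + 1 : ℝ) + 1) ^ (-a) * (i + 2) = ((i : ℝ) + 2) ^ (1 - a) := by
    rw [show (i + 1 : ℝ) + 1 = i + 2 by ring, sub_eq_neg_add, Real.rpow_add (by positivity),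
      Real.rpow_one]
  calc Real.Gamma ((i + 1 : ℕ) + 2 - a) / (i + 1).factorial
      ≤ 2 * ((i + 1 : ℝ) + 1) ^ (-a) * Real.Gamma ((i + 1 : ℝ) + 2) / (i + 1).factorial := by
        gcongr; push_cast; exact Gamma_add_two_sub_le hi ha0 ha2
    _ = 2 * ((i : ℝ) + 2) ^ (1 - a) := by
        rw [hfac, ← hpow]; field_simp
    _ ≤ Real.Gamma (2 - a) + 2 * (1 + y ^ (1 - a)) := by
        have := rpow_le_one_add_rpow (x := i + 2) (y := y) (by linarith)
          (by push_cast at hjy; linarith) (1 - a)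
        have := Gamma_nonneg_of_nonneg (by linarith : 0 ≤ 2 - a)
        linarith

end Real

namespace Complex

theorem norm_Gamma_le_Gamma_re {s : ℂ} (hs : 0 < s.re) :
    ‖Complex.Gamma s‖ ≤ Real.Gamma s.re := by
  rw [Complex.Gamma_eq_integral hs, Real.Gamma_eq_integral hs]
  refine (norm_integral_le_integral_norm _).trans_eq (setIntegral_congr_fun measurableSet_Ioi ?_)
  intro x hx
  dsimp only
  rw [norm_mul, Complex.norm_real, Real.norm_of_nonneg (Real.exp_pos _).le,
    Complex.norm_cpow_eq_rpow_re_of_pos hx, Complex.sub_re, Complex.one_re]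

theorem norm_Gamma_mul_im_sq_le {w : ℂ} (hw : 0 < w.re + 2) :
    ‖Complex.Gamma w‖ * w.im ^ 2 ≤ Real.Gamma (w.re + 2) := by
  by_cases him : w.im = 0
  · simpa [him] using (Real.Gamma_pos_of_pos hw).le
  have hw0 : w ≠ 0 := fun h => him (by simp [h])
  have hw1 : w + 1 ≠ 0 := fun h => him (by simpa using congrArg Complex.im h)
  have hrec : Complex.Gamma (w + 2) = (w + 1) * (w * Complex.Gamma w) := by
    rw [← Complex.Gamma_add_one w hw0, ← Complex.Gamma_add_one (w + 1) hw1]; ring_nf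
  have hle : w.im ^ 2 ≤ ‖w + 1‖ * ‖w‖ := by
    rw [← sq_abs, sq]
    gcongr
    · simpa using Complex.abs_im_le_norm (w + 1)
    · exact Complex.abs_im_le_norm w
  calc ‖Complex.Gamma w‖ * w.im ^ 2
      ≤ ‖Complex.Gamma w‖ * (‖w + 1‖ * ‖w‖) := by gcongr
    _ = ‖Complex.Gamma (w + 2)‖ := by rw [hrec, norm_mul, norm_mul]; ring
    _ ≤ Real.Gamma (w.re + 2) := by
        simpa using norm_Gamma_le_Gamma_re (s := w + 2) (by simpa using hw)

theorem ofReal_cpow_conj {r : ℝ} (hr : 0 ≤ r) (w : ℂ) :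
    (r : ℂ) ^ conj w = conj ((r : ℂ) ^ w) := by
  rw [Complex.cpow_conj _ _ (by rw [Complex.arg_ofReal_of_nonneg hr]; exact Real.pi_ne_zero.symm),
    Complex.conj_ofReal]

end Complex

theorem Gamma_one_sub_mul_prod_sub {z : ℂ} (hz : ∀ n : ℕ, z ≠ n) (j : ℕ) :
    Complex.Gamma (1 - z) * ∏ i ∈ Finset.range j, (z - i) =
      (-1) ^ j * (-z) * Complex.Gamma (j - z) := by
  induction j with
  | zero =>
    simpa [sub_eq_neg_add] using Complex.Gamma_add_one (-z) (by simpa using hz 0)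
  | succ j ih =>
    rw [Finset.prod_range_succ, ← mul_assoc, ih, Nat.cast_succ, add_sub_right_comm,
      Complex.Gamma_add_one _ (sub_ne_zero.mpr (hz j).symm)]
    ring

theorem gbinom_conj (z : ℂ) (j : ℕ) : gbinom (conj z) j = conj (gbinom z j) := by
  simp [gbinom, map_prod]

def gammaQuot (z : ℂ) (j : ℕ) : ℝ := ‖Complex.Gamma (j - z)‖ / j.factorial

theorem norm_Gamma_one_sub_mul_norm_gbinom {z : ℂ} (hz : ∀ n : ℕ, z ≠ n) (j : ℕ) :
    ‖Complex.Gamma (1 - z)‖ * ‖gbinom z j‖ = ‖z‖ * gammaQuot z j := by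
  rw [gbinom, gammaQuot, norm_div, ← mul_div_assoc, ← norm_mul, Gamma_one_sub_mul_prod_sub hz]
  simp [mul_div_assoc]

theorem gammaQuot_nonneg (z : ℂ) (j : ℕ) : 0 ≤ gammaQuot z j := by
  unfold gammaQuot; positivity

theorem gammaQuot_le_Gamma_div {z : ℂ} {j : ℕ} (hj : z.re < j) :
    gammaQuot z j ≤ Real.Gamma (j - z.re) / Real.Gamma (j + 1) := by
  rw [gammaQuot, Real.Gamma_nat_eq_factorial]
  gcongr
  simpa using Complex.norm_Gamma_le_Gamma_re (s := j - z) (by simpa using hj)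

theorem gammaQuot_nat_add_le {z : ℂ} {m : ℕ} (hm : z.re < m) (j : ℕ) :
    gammaQuot z (j + m) ≤ Real.Gamma (j + m - z.re) / Real.Gamma (j + m + 1) := by
  have hj : (0 : ℝ) ≤ j := Nat.cast_nonneg j
  simpa using gammaQuot_le_Gamma_div (j := j + m) (by push_cast; linarith)

theorem summable_gammaQuot {z : ℂ} (hz : 0 < z.re) : Summable (gammaQuot z) := by
  have hm : z.re < (⌊z.re⌋₊ + 1 : ℕ) := by simpa using Nat.lt_floor_add_one z.re
  rw [← summable_nat_add_iff (⌊z.re⌋₊ + 1)]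
  exact .of_nonneg_of_le (fun j => gammaQuot_nonneg z _) (gammaQuot_nat_add_le hm)
    (Real.summable_Gamma_add_sub_div hz hm)

theorem sum_range_gammaQuot_mul_im_sq_le {z : ℂ} (ha0 : 0 ≤ z.re) (ha2 : z.re < 2) {m : ℕ}
    {y : ℝ} (hmy : (m : ℝ) ≤ y) :
    (∑ j ∈ Finset.range m, gammaQuot z j) * z.im ^ 2 ≤
      m * (Real.Gamma (2 - z.re) + 2 * (1 + y ^ (1 - z.re))) := by
  rw [Finset.sum_mul]
  refine (Finset.sum_le_card_nsmul _ _ (Real.Gamma (2 - z.re) + 2 * (1 + y ^ (1 - z.re)))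
    fun j hj => ?_).trans_eq (by rw [Finset.card_range, nsmul_eq_mul])
  have hjm : (j : ℝ) + 1 ≤ m := by exact_mod_cast Finset.mem_range.mp hj
  have hj0 : (0 : ℝ) ≤ j := Nat.cast_nonneg j
  have hG := Complex.norm_Gamma_mul_im_sq_le (w := j - z) (by simp; linarith)
  simp only [Complex.sub_im, Complex.natCast_im, zero_sub, neg_sq, Complex.sub_re,
    Complex.natCast_re] at hG
  calc gammaQuot z j * z.im ^ 2 = ‖Complex.Gamma (j - z)‖ * z.im ^ 2 / j.factorial := by
        rw [gammaQuot]; ring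
    _ ≤ Real.Gamma (j + 2 - z.re) / j.factorial := by
        gcongr; exact hG.trans_eq (by ring_nf)
    _ ≤ _ := Real.Gamma_nat_add_two_sub_div_factorial_le ha0 ha2.le (hjm.trans hmy)

theorem tsum_gammaQuot_nat_add_le {z : ℂ} (ha0 : 0 < z.re) (ha2 : z.re ≤ 2) {m : ℕ}
    (hm : 3 ≤ m) :
    ∑' j, gammaQuot z (j + m) ≤ 2 * ((m : ℝ) - 1) ^ (-z.re) / z.re := by
  have hm3 : (3 : ℝ) ≤ m := by exact_mod_cast hm
  have hzm : z.re < m := by linarith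
  have hGamma := Real.Gamma_add_two_sub_le (y := m - 2) (by linarith) ha0.le ha2
  rw [show (m : ℝ) - 2 + 2 = m by ring, show (m : ℝ) - 2 + 1 = m - 1 by ring] at hGamma
  calc ∑' j, gammaQuot z (j + m)
      ≤ ∑' j : ℕ, Real.Gamma (j + m - z.re) / Real.Gamma (j + m + 1) :=
        Summable.tsum_le_tsum (gammaQuot_nat_add_le hzm)
          ((summable_nat_add_iff m).2 (summable_gammaQuot ha0))
          (Real.summable_Gamma_add_sub_div ha0 hzm)
    _ ≤ Real.Gamma (m - z.re) / (z.re * Real.Gamma m) := Real.tsum_Gamma_add_sub_div_le ha0 hzm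
    _ ≤ 2 * ((m : ℝ) - 1) ^ (-z.re) / z.re := by
        rw [div_le_div_iff₀ (by positivity) ha0]
        calc Real.Gamma (m - z.re) * z.re
            ≤ 2 * ((m : ℝ) - 1) ^ (-z.re) * Real.Gamma m * z.re := by
              gcongr
          _ = _ := by ring

theorem tsum_gammaQuot_mul_abs_im_le {z : ℂ} (ha0 : 0 < z.re) (ha2 : z.re < 2)
    (hb : 1 ≤ |z.im|) :
    (∑' j, gammaQuot z j) * |z.im| ≤
      4 * (Real.Gamma (2 - z.re) + 2 * (1 + 4 ^ (1 - z.re) * |z.im| ^ (1 - z.re))) +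
        2 / z.re * |z.im| ^ (1 - z.re) := by
  set a := z.re
  set b := |z.im|
  set m := ⌈b⌉₊ + 2
  have hb0 : 0 < b := by linarith
  have hmb : b + 2 ≤ m := by simp only [m]; push_cast; linarith [Nat.le_ceil b]
  have hm4 : (m : ℝ) ≤ 4 * b := by
    simp only [m]; push_cast; linarith [Nat.ceil_lt_add_one hb0.le]
  have hhead : (∑ j ∈ Finset.range m, gammaQuot z j) * b ≤
      4 * (Real.Gamma (2 - a) + 2 * (1 + 4 ^ (1 - a) * b ^ (1 - a))) := by
    rw [← Real.mul_rpow (by norm_num) hb0.le]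
    refine le_of_mul_le_mul_right ?_ hb0
    calc _ = (∑ j ∈ Finset.range m, gammaQuot z j) * z.im ^ 2 := by rw [← sq_abs]; ring
      _ ≤ _ := sum_range_gammaQuot_mul_im_sq_le ha0.le ha2 hm4
      _ ≤ 4 * b * (Real.Gamma (2 - a) + 2 * (1 + (4 * b) ^ (1 - a))) := by
          have : 0 ≤ Real.Gamma (2 - a) := Real.Gamma_nonneg_of_nonneg (by linarith)
          gcongr
      _ = _ := by ring
  have htail : (∑' j, gammaQuot z (j + m)) * b ≤ 2 / a * b ^ (1 - a) := by
    have : ((m : ℝ) - 1) ^ (-a) ≤ b ^ (-a) :=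
      Real.rpow_le_rpow_of_nonpos hb0 (by linarith) (by linarith)
    have htail := tsum_gammaQuot_nat_add_le ha0 ha2.le (m := m)
      (by exact_mod_cast (show (3 : ℝ) ≤ m by linarith))
    calc _ ≤ 2 * b ^ (-a) / a * b := by gcongr; exact htail.trans (by gcongr)
      _ = 2 / a * b ^ (1 - a) := by
        rw [sub_eq_neg_add, Real.rpow_add hb0, Real.rpow_one]; ring
  rw [← (summable_gammaQuot ha0).sum_add_tsum_nat_add m, add_mul]
  exact add_le_add hhead htail

theorem exists_norm_mul_tsum_gammaQuot_le {a : ℝ} (ha0 : 0 < a) (ha2 : a < 2) :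
    ∃ K, ∀ z : ℂ, z.re = a → 1 ≤ |z.im| →
      ‖z‖ * ∑' j, gammaQuot z j ≤ K * (1 + |z.im| ^ (1 - a)) := by
  refine ⟨12 * (Real.Gamma (2 - a) + 2) + 24 * 4 ^ (1 - a) + 6 / a, fun z hre hb => ?_⟩
  have hS := tsum_gammaQuot_mul_abs_im_le (hre ▸ ha0) (hre ▸ ha2) hb
  rw [hre] at hS
  have hz : ‖z‖ ≤ 3 * |z.im| := by
    calc ‖z‖ ≤ |z.re| + |z.im| := Complex.norm_le_abs_re_add_abs_im z
      _ ≤ 3 * |z.im| := by rw [hre, abs_of_pos ha0]; linarith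
  have hS0 : 0 ≤ ∑' j, gammaQuot z j := tsum_nonneg (gammaQuot_nonneg z)
  have : 0 ≤ 24 * 4 ^ (1 - a) + 6 / a + 12 * (Real.Gamma (2 - a) + 2) * |z.im| ^ (1 - a) := by
    have := Real.Gamma_nonneg_of_nonneg (by linarith : 0 ≤ 2 - a)
    positivity
  calc ‖z‖ * ∑' j, gammaQuot z j ≤ 3 * ((∑' j, gammaQuot z j) * |z.im|) := by nlinarith
    _ ≤ _ := by linear_combination 3 * hS + this

theorem summable_norm_mul_norm_mul_tsum_gammaQuot {a t C : ℝ} (ha0 : 0 < a) (ha2 : a < 2)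
    (ht : t ≠ 0) {c : ℤ → ℂ} (hc : ∀ k : ℤ, k ≠ 0 → ‖c k‖ ≤ C / (k : ℝ) ^ 2) :
    Summable (fun k : ℤ =>
      ‖c k‖ * (‖(a : ℂ) - I * k * t‖ * ∑' j, gammaQuot ((a : ℂ) - I * k * t) j)) := by
  obtain ⟨K, hK⟩ := exists_norm_mul_tsum_gammaQuot_le ha0 ha2
  have hmaj : Summable (fun k : ℤ =>
      C * K * (|(k : ℝ)| ^ (-(2 : ℝ)) + |t| ^ (1 - a) * |(k : ℝ)| ^ (-(1 + a)))) :=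
    ((Real.summable_abs_int_rpow (by norm_num)).add
      ((Real.summable_abs_int_rpow (by linarith)).mul_left _)).mul_left _
  have hlarge : ∀ᶠ k : ℤ in cofinite, |t|⁻¹ ≤ ‖(k : ℝ)‖ :=
    (tendsto_norm_cocompact_atTop.comp Int.tendsto_coe_cofinite).eventually_ge_atTop _
  refine hmaj.of_norm_bounded_eventually ?_
  filter_upwards [hlarge] with k hk
  rw [Real.norm_eq_abs] at hk
  have ht0 : 0 < |t| := abs_pos.mpr ht
  have hk0 : 0 < |(k : ℝ)| := lt_of_lt_of_le (inv_pos.mpr ht0) hk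
  have him : |((a : ℂ) - I * k * t).im| = |t| * |(k : ℝ)| := by
    simp [abs_mul, mul_comm]
  have hb : 1 ≤ |((a : ℂ) - I * k * t).im| := by
    rw [him]; exact (inv_le_iff_one_le_mul₀' ht0).mp hk
  have hck := hc k (by rintro rfl; simp at hk0)
  have hS : 0 ≤ ‖(a : ℂ) - I * k * t‖ * ∑' j, gammaQuot ((a : ℂ) - I * k * t) j :=
    mul_nonneg (norm_nonneg _) (tsum_nonneg fun j => gammaQuot_nonneg _ j)
  rw [Real.norm_of_nonneg (mul_nonneg (norm_nonneg _) hS)]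
  calc ‖c k‖ * (‖(a : ℂ) - I * k * t‖ * ∑' j, gammaQuot ((a : ℂ) - I * k * t) j)
      ≤ C / (k : ℝ) ^ 2 * (K * (1 + (|t| * |(k : ℝ)|) ^ (1 - a))) :=
        mul_le_mul hck (him ▸ hK _ (by simp) hb) hS ((norm_nonneg _).trans hck)
    _ = _ := by
        rw [Real.mul_rpow ht0.le hk0.le, ← sq_abs (k : ℝ), show -(1 + a) = (1 - a) - 2 by ring,
          Real.rpow_sub hk0 (1 - a) 2, Real.rpow_neg hk0.le, Real.rpow_two]
        ring

theorem summable_norm_mul_norm_mul_gammaQuot {a t C : ℝ} (ha0 : 0 < a) (ha2 : a < 2)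
    (ht : t ≠ 0) {c : ℤ → ℂ} (hc : ∀ k : ℤ, k ≠ 0 → ‖c k‖ ≤ C / (k : ℝ) ^ 2) :
    Summable (fun p : ℤ × ℕ =>
      ‖c p.1‖ * ‖(a : ℂ) - I * p.1 * t‖ * gammaQuot ((a : ℂ) - I * p.1 * t) p.2) := by
  refine (summable_prod_of_nonneg fun p => mul_nonneg (by positivity) (gammaQuot_nonneg _ _)).2
    ⟨fun k => ?_, ?_⟩
  · exact (summable_gammaQuot (z := (a : ℂ) - I * k * t) (by simpa using ha0)).mul_left
      (‖c k‖ * ‖(a : ℂ) - I * k * t‖)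
  · simpa only [tsum_mul_left, mul_assoc] using
      summable_norm_mul_norm_mul_tsum_gammaQuot ha0 ha2 ht hc

theorem im_tsum_eq_zero_of_neg_eq_conj {F : ℤ → ℂ} (hF : ∀ k, F (-k) = conj (F k)) :
    (∑' k, F k).im = 0 := by
  rw [← Complex.conj_eq_iff_im, Complex.conj_tsum, ← (Equiv.neg ℤ).tsum_eq]
  exact tsum_congr fun k => by simp [hF]

theorem norm_Gamma_mul_cpow_mul_gbinom_le {a t h M y : ℝ} {s c : ℂ} (hs : ‖s‖ = 1) (hh : 0 < h)
    {k : ℤ} (hz : ∀ n : ℕ, (a : ℂ) - I * k * t ≠ n) (hy : |y| ≤ M) (j : ℕ) :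
    ‖s * (c * Complex.Gamma (I * k * t - a + 1)) * (h : ℂ) ^ (I * k * t - a) *
        (gbinom ((a : ℂ) - I * k * t) j * (-1) ^ j * y)‖ ≤
      h ^ (-a) * M * (‖c‖ * ‖(a : ℂ) - I * k * t‖ * gammaQuot ((a : ℂ) - I * k * t) j) := by
  have hpow : ‖(h : ℂ) ^ (I * k * t - a)‖ = h ^ (-a) := by
    rw [Complex.norm_cpow_eq_rpow_re_of_pos hh]; simp
  calc _ = h ^ (-a) * |y| * (‖c‖ * (‖Complex.Gamma (1 - ((a : ℂ) - I * k * t))‖ *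
          ‖gbinom ((a : ℂ) - I * k * t) j‖)) := by
        rw [show I * k * t - a + 1 = 1 - ((a : ℂ) - I * k * t) by ring]
        simp only [norm_mul, norm_pow, norm_neg, norm_one, one_pow, mul_one, hs, hpow,
          Complex.norm_real, Real.norm_eq_abs]
        ring
    _ ≤ _ := by
        rw [norm_Gamma_one_sub_mul_norm_gbinom hz j, ← mul_assoc ‖c‖]
        exact mul_le_mul_of_nonneg_right (mul_le_mul_of_nonneg_left hy (by positivity))
          (mul_nonneg (by positivity) (gammaQuot_nonneg _ _))

theorem im_tsum_Gamma_mul_cpow_mul_tsum_gbinom_eq_zero {a t h : ℝ} {s : ℂ} (hs : conj s = s)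
    (hh : 0 < h) {c : ℤ → ℂ} (hc : ∀ k, c (-k) = conj (c k)) (y : ℕ → ℝ) :
    (∑' k : ℤ, s * (c k * Complex.Gamma (I * k * t - a + 1)) * (h : ℂ) ^ (I * k * t - a) *
        ∑' j : ℕ, gbinom ((a : ℂ) - I * k * t) j * (-1) ^ j * (y j : ℂ)).im = 0 := by
  refine im_tsum_eq_zero_of_neg_eq_conj fun k => ?_
  set w : ℂ := I * k * t
  have hw : I * ((-k : ℤ) : ℂ) * t = conj w := by simp [w]
  rw [hw, show conj w - a + 1 = conj (w - a + 1) by simp, show conj w - a = conj (w - a) by simp,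
    show (a : ℂ) - conj w = conj (a - w) by simp, Complex.Gamma_conj, hc,
    Complex.ofReal_cpow_conj hh.le]
  simp only [gbinom_conj, map_mul, Complex.conj_tsum, map_pow, map_neg, map_one,
    Complex.conj_ofReal, hs]

theorem stmt12 (c α : ℝ) (hc : 1 < c) (hα : α ∈ Set.Ioo (0 : ℝ) 2) (hα1 : α ≠ 1)
    (θ : ℝ → ℝ) (cfs : ℤ → ℂ) (hθ : IsSmoothAdmissible c α θ cfs)
    (ctil : ℝ) (hctil : ctil = 2 * Real.pi * α / Real.log c)
    (ω : ℤ → ℂ)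
    (hω : ∀ k : ℤ, ω k = (if α < 1 then 1 else -1) *
      (cfs k * Complex.Gamma (Complex.I * (k : ℂ) * (ctil : ℂ) - (α : ℂ) + 1)))
    (f : ℝ → ℝ) (hfb : ∃ M : ℝ, ∀ y, |f y| ≤ M)
    (h : ℝ) (hh : 0 < h) (x : ℝ) :
    Summable (fun p : ℤ × ℕ =>
      ‖ω p.1 * ((h : ℂ)) ^ (Complex.I * (p.1 : ℂ) * (ctil : ℂ) - (α : ℂ)) *
        (gbinom ((α : ℂ) - Complex.I * (p.1 : ℂ) * (ctil : ℂ)) p.2 * (-1 : ℂ) ^ p.2 *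
          ((f (x - p.2 * h) : ℝ) : ℂ))‖) ∧
    (∑' k : ℤ, ω k * ((h : ℂ)) ^ (Complex.I * (k : ℂ) * (ctil : ℂ) - (α : ℂ)) *
        ∑' j : ℕ, gbinom ((α : ℂ) - Complex.I * (k : ℂ) * (ctil : ℂ)) j * (-1 : ℂ) ^ j *
          ((f (x - j * h) : ℝ) : ℂ)).im = 0 := by
  obtain ⟨hα0, hα2⟩ := hα
  obtain ⟨-, -, hcfs_conj, ⟨C, -, hC⟩, -, -⟩ := hθ
  obtain ⟨M, hM⟩ := hfb
  have hctil0 : ctil ≠ 0 := by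
    rw [hctil]; have := Real.log_pos hc; positivity
  have hnat : ∀ (k : ℤ) (n : ℕ), (α : ℂ) - I * k * ctil ≠ n := by
    intro k n hkn
    have hre : α = n := by simpa using congrArg Complex.re hkn
    have hn : n < 2 := by exact_mod_cast hre ▸ hα2
    interval_cases n <;> simp_all
  have hsign : ‖(if α < 1 then 1 else -1 : ℂ)‖ = 1 := by split_ifs <;> simp
  have hsign_conj : conj (if α < 1 then 1 else -1 : ℂ) = if α < 1 then 1 else -1 := by
    split_ifs <;> simp
  simp only [hω]
  exact ⟨.of_nonneg_of_le (fun _ => norm_nonneg _)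
      (fun p => norm_Gamma_mul_cpow_mul_gbinom_le hsign hh (hnat p.1) (hM _) p.2)
      ((summable_norm_mul_norm_mul_gammaQuot hα0 hα2 hctil0 hC).mul_left (h ^ (-α) * M)),
    im_tsum_Gamma_mul_cpow_mul_tsum_gbinom_eq_zero hsign_conj hh hcfs_conj _⟩
end
end
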